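/- arXiv:2112.05713 — 11 statements merged into one kernel-verified Lean document; each statement's English description precedes it below -/
import Mathlib

section
/- Assume (Hk0) and (H0). Then every positive solution of the scalar Nicholson equation is strongly persistent, i.e. liminf_{t→∞} x(t) > 0. -/
open Filter Set

/-- Monotonicity of `y ↦ y * exp (-y)` on `[0,1]`. -/
lemma nicholson_f_mono {a b : ℝ} (ha : 0 ≤ a) (hab : a ≤ b) (hb : b ≤ 1) :
    a * Real.exp (-a) ≤ b * Real.exp (-b) := by
  have h1 : (a - b) + 1 ≤ Real.exp (a - b) := Real.add_one_le_exp _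
  have h2 : a ≤ b * Real.exp (a - b) := by nlinarith
  calc a * Real.exp (-a) ≤ (b * Real.exp (a - b)) * Real.exp (-a) :=
        mul_le_mul_of_nonneg_right h2 (Real.exp_pos _).le
    _ = b * Real.exp (-b) := by
        rw [mul_assoc, ← Real.exp_add]; ring_nf

/-- If `t` is a minimum of `x` on `[a,b]` with `a < t ≤ b` and `x` is differentiable
at `t`, then `deriv x t ≤ 0` (one-sided argument from the left). -/
lemma nicholson_deriv_nonpos {x : ℝ → ℝ} {a b t : ℝ} (hat : a < t) (htb : t ≤ b)
    (hd : DifferentiableAt ℝ x t) (hmin : ∀ s ∈ Set.Icc a b, x t ≤ x s) :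
    deriv x t ≤ 0 := by
  have hD := hd.hasDerivAt
  rw [hasDerivAt_iff_tendsto_slope] at hD
  have h2 : Filter.Tendsto (slope x t) (nhdsWithin t (Set.Iio t)) (nhds (deriv x t)) :=
    hD.mono_left (nhdsWithin_mono t (fun y hy => ne_of_lt hy))
  have hmem : Set.Ioo a t ∈ nhdsWithin t (Set.Iio t) :=
    Ioo_mem_nhdsLT_of_mem ⟨hat, le_refl t⟩
  refine le_of_tendsto h2 ?_
  filter_upwards [hmem] with s hs
  rw [slope_def_field]
  have hnum : 0 ≤ x s - x t := sub_nonneg.2 (hmin s ⟨hs.1.le, hs.2.le.trans htb⟩)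
  have hden : s - t < 0 := by linarith [hs.2]
  exact div_nonpos_of_nonneg_of_nonpos hnum hden.le

/-- Proposition 3.2 of the paper: under (Hk0) and (H0) every positive solution of
the scalar Nicholson equation is strongly persistent, i.e. `liminf_{t→∞} x(t) > 0`
(the liminf being taken in the extended reals). -/
theorem scalar_nicholson_strong_persistence
    (k : ℕ) (hk : 0 < k)
    (τ : Fin k → ℝ) (hτ : ∀ j, 0 < τ j)
    (τs : ℝ) (hτs_ub : ∀ j, τ j ≤ τs) (hτs_mem : ∃ j, τ j = τs)
    (d H : ℝ → ℝ → ℝ) (p : Fin k → ℝ → ℝ)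
    (hd_cont : Continuous fun q : ℝ × ℝ => d q.1 q.2)
    (hH_cont : Continuous fun q : ℝ × ℝ => H q.1 q.2)
    (hp_cont : ∀ j, Continuous (p j))
    (hd_nonneg : ∀ t, 0 ≤ t → ∀ y, 0 ≤ y → 0 ≤ d t y)
    (hH_nonneg : ∀ t, 0 ≤ t → ∀ y, 0 ≤ y → 0 ≤ H t y)
    (hp_nonneg : ∀ j, ∀ t, 0 ≤ t → 0 ≤ p j t)
    -- (Hk0)
    (hk0 : ∃ k₀ : ℝ, 0 < k₀ ∧ ∀ t, 0 ≤ t → ∀ y, 0 ≤ y → d t y + H t y ≤ k₀ * y)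
    -- (H0)
    (hH0 : ∃ δ ∈ Set.Ioo (0 : ℝ) 1, ∃ ρ : ℝ, 0 < ρ ∧
      ∀ t, 0 ≤ t → ∀ y, 0 < y → y ≤ ρ →
        d t y + H t y < (1 - δ) * y * ∑ j, p j t)
    -- positive solution
    (x : ℝ → ℝ)
    (hx_cont : Continuous x)
    (hx_pos : ∀ t, -τs ≤ t → 0 < x t)
    (hx_diff : ∀ t, 0 ≤ t → DifferentiableAt ℝ x t)
    (hx_eq : ∀ t, 0 ≤ t →
      deriv x t = -d t (x t)
        + ∑ j, p j t * (x (t - τ j) * Real.exp (-x (t - τ j)))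
        - H t (x t)) :
    0 < Filter.liminf (fun t => (x t : EReal)) Filter.atTop := by
  obtain ⟨k₀, hk₀_pos, hk₀⟩ := hk0
  obtain ⟨δ, ⟨hδ0, hδ1⟩, ρ, hρ_pos, hH0⟩ := hH0
  obtain ⟨j₀, hj₀⟩ := hτs_mem
  have hτs_pos : 0 < τs := hj₀ ▸ hτ j₀
  -- positivity of x on [0, ∞)
  have hx_pos' : ∀ t : ℝ, 0 ≤ t → 0 < x t := fun t ht =>
    hx_pos t (le_trans (by linarith) ht)
  have hx_delay_pos : ∀ t : ℝ, 0 ≤ t → ∀ j, 0 < x (t - τ j) := by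
    intro t ht j
    exact hx_pos _ (by have := hτs_ub j; linarith)
  -- derivative lower bound: deriv x t ≥ -k₀ x t for t ≥ 0
  have hderiv_lb : ∀ t : ℝ, 0 ≤ t → -(k₀ * x t) ≤ deriv x t := by
    intro t ht
    rw [hx_eq t ht]
    have hsum : 0 ≤ ∑ j, p j t * (x (t - τ j) * Real.exp (-x (t - τ j))) := by
      refine Finset.sum_nonneg fun j _ => mul_nonneg (hp_nonneg j t ht) ?_
      exact mul_nonneg (hx_delay_pos t ht j).le (Real.exp_pos _).le
    have hG := hk₀ t ht (x t) (hx_pos' t ht).le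
    linarith
  -- exponential comparison: x s ≤ x t * exp (k₀ (t - s)) for 0 ≤ s ≤ t
  have key : ∀ s t : ℝ, 0 ≤ s → s ≤ t → x s ≤ x t * Real.exp (k₀ * (t - s)) := by
    have hg_mono : MonotoneOn (fun t => x t * Real.exp (k₀ * t)) (Set.Ici (0 : ℝ)) := by
      apply monotoneOn_of_deriv_nonneg (convex_Ici 0)
      · exact (hx_cont.mul (Real.continuous_exp.comp (continuous_const.mul continuous_id))).continuousOn
      · intro t ht
        rw [interior_Ici] at ht
        have h1 : DifferentiableAt ℝ x t := hx_diff t (le_of_lt ht)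
        have h2 : DifferentiableAt ℝ (fun t : ℝ => Real.exp (k₀ * t)) t :=
          (((hasDerivAt_id t).const_mul k₀).exp).differentiableAt
        exact (h1.mul h2).differentiableWithinAt
      · intro t ht
        rw [interior_Ici] at ht
        have hx' : HasDerivAt x (deriv x t) t := (hx_diff t ht.le).hasDerivAt
        have he : HasDerivAt (fun t : ℝ => Real.exp (k₀ * t))
            (Real.exp (k₀ * t) * (k₀ * 1)) t := ((hasDerivAt_id t).const_mul k₀).exp
        have hg : HasDerivAt (fun t => x t * Real.exp (k₀ * t))
            (deriv x t * Real.exp (k₀ * t) + x t * (Real.exp (k₀ * t) * (k₀ * 1))) t :=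
          hx'.mul he
        rw [hg.deriv]
        have hlb := hderiv_lb t ht.le
        have hep := Real.exp_pos (k₀ * t)
        nlinarith
    intro s t hs hst
    have h := hg_mono (Set.mem_Ici.2 hs) (Set.mem_Ici.2 (hs.trans hst)) hst
    have h3 : x s * Real.exp (k₀ * s) ≤ (x t * Real.exp (k₀ * (t - s))) * Real.exp (k₀ * s) := by
      rw [mul_assoc, ← Real.exp_add]
      have : k₀ * (t - s) + k₀ * s = k₀ * t := by ring
      rw [this]; exact h
    exact le_of_mul_le_mul_right h3 (Real.exp_pos _)
  -- set up ε
  have hL_pos : 0 < -Real.log (1 - δ) := by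
    have h : Real.log (1 - δ) < 0 := Real.log_neg (by linarith) (by linarith)
    linarith
  obtain ⟨c, hc_mem, hc_min⟩ := isCompact_Icc.exists_isMinOn
    (Set.nonempty_Icc.2 hτs_pos.le) (hx_cont.continuousOn (s := Set.Icc 0 τs))
  have hc_pos : 0 < x c := hx_pos' c hc_mem.1
  set ε : ℝ := min (min (x c) ρ) (min (Real.exp (-(k₀ * τs))) (-Real.log (1 - δ))) with hε_def
  have hε_pos : 0 < ε :=
    lt_min (lt_min hc_pos hρ_pos) (lt_min (Real.exp_pos _) hL_pos)
  by_contra hcon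
  -- there is t₁ ≥ 0 with x t₁ < ε
  have hex : ∃ t₁, 0 ≤ t₁ ∧ x t₁ < ε := by
    by_contra hne
    push_neg at hne
    apply hcon
    have hev : ∀ᶠ t in Filter.atTop, (ε : EReal) ≤ ((x t : ℝ) : EReal) := by
      filter_upwards [Filter.eventually_ge_atTop (0 : ℝ)] with t ht
      exact_mod_cast hne t ht
    calc (0 : EReal) < (ε : EReal) := by exact_mod_cast hε_pos
      _ ≤ Filter.liminf (fun t => ((x t : ℝ) : EReal)) Filter.atTop :=
        Filter.le_liminf_of_le (by isBoundedDefault) hev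
  obtain ⟨t₁, ht₁0, ht₁⟩ := hex
  obtain ⟨ts, hts_mem, hts_min⟩ := isCompact_Icc.exists_isMinOn
    (Set.nonempty_Icc.2 ht₁0) (hx_cont.continuousOn (s := Set.Icc 0 t₁))
  have hts_min' : ∀ s ∈ Set.Icc (0 : ℝ) t₁, x ts ≤ x s := fun s hs => hts_min hs
  have hxs_lt : x ts < ε :=
    lt_of_le_of_lt (hts_min' t₁ ⟨ht₁0, le_refl t₁⟩) ht₁
  have hxs_pos : 0 < x ts := hx_pos' ts hts_mem.1
  -- ts > τs
  have hts_gt : τs < ts := by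
    by_contra hle
    push_neg at hle
    have h1 : x c ≤ x ts := hc_min ⟨hts_mem.1, hle⟩
    have h2 : ε ≤ x c := le_trans (min_le_left _ _) (min_le_left _ _)
    linarith
  -- derivative at ts is nonpositive
  have hts_pos : 0 < ts := hτs_pos.trans hts_gt
  have hderiv_le : deriv x ts ≤ 0 :=
    nicholson_deriv_nonpos hts_pos hts_mem.2 (hx_diff ts hts_pos.le) hts_min'
  -- apply (H0) at (ts, x ts)
  have hxs_ρ : x ts ≤ ρ :=
    le_of_lt (lt_of_lt_of_le hxs_lt (le_trans (min_le_left _ _) (min_le_right _ _)))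
  have hG_lt := hH0 ts hts_pos.le (x ts) hxs_pos hxs_ρ
  have hG_nonneg : 0 ≤ d ts (x ts) + H ts (x ts) :=
    add_nonneg (hd_nonneg ts hts_pos.le (x ts) hxs_pos.le)
      (hH_nonneg ts hts_pos.le (x ts) hxs_pos.le)
  have hS_pos : 0 < ∑ j, p j ts := by
    have h := lt_of_le_of_lt hG_nonneg hG_lt
    have hpos : 0 < (1 - δ) * x ts := mul_pos (by linarith) hxs_pos
    by_contra hS
    push_neg at hS
    nlinarith [mul_nonpos_of_nonneg_of_nonpos hpos.le hS]
  -- lower bound for the sum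
  have hsum_ge : (x ts * Real.exp (-x ts)) * (∑ j, p j ts)
      ≤ ∑ j, p j ts * (x (ts - τ j) * Real.exp (-x (ts - τ j))) := by
    rw [Finset.mul_sum]
    refine Finset.sum_le_sum fun j _ => ?_
    have hτj := hτ j
    have hτjs := hτs_ub j
    have hb0 : 0 ≤ ts - τ j := by linarith
    have hlow : x ts ≤ x (ts - τ j) :=
      hts_min' (ts - τ j) ⟨hb0, by linarith [hts_mem.2]⟩
    have hup : x (ts - τ j) ≤ x ts * Real.exp (k₀ * τ j) := by
      have := key (ts - τ j) ts hb0 (by linarith)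
      simpa using this
    have hb1 : x (ts - τ j) ≤ 1 := by
      have h1 : Real.exp (k₀ * τ j) ≤ Real.exp (k₀ * τs) :=
        Real.exp_le_exp.2 (by nlinarith)
      have h2 : x ts < Real.exp (-(k₀ * τs)) :=
        lt_of_lt_of_le hxs_lt (le_trans (min_le_right _ _) (min_le_left _ _))
      have h3 : x (ts - τ j) ≤ x ts * Real.exp (k₀ * τs) :=
        le_trans hup (mul_le_mul_of_nonneg_left h1 hxs_pos.le)
      have h4 : x ts * Real.exp (k₀ * τs) < Real.exp (-(k₀ * τs)) * Real.exp (k₀ * τs) :=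
        mul_lt_mul_of_pos_right h2 (Real.exp_pos _)
      have h5 : Real.exp (-(k₀ * τs)) * Real.exp (k₀ * τs) = 1 := by
        rw [← Real.exp_add]; simp
      linarith
    calc x ts * Real.exp (-x ts) * p j ts = p j ts * (x ts * Real.exp (-x ts)) := by ring
      _ ≤ p j ts * (x (ts - τ j) * Real.exp (-x (ts - τ j))) :=
        mul_le_mul_of_nonneg_left (nicholson_f_mono hxs_pos.le hlow hb1)
          (hp_nonneg j ts hts_pos.le)
  -- exp (-x ts) > 1 - δ
  have hexp : 1 - δ < Real.exp (-x ts) := by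
    have h1 : x ts < -Real.log (1 - δ) :=
      lt_of_lt_of_le hxs_lt (le_trans (min_le_right _ _) (min_le_right _ _))
    have h2 : Real.exp (Real.log (1 - δ)) < Real.exp (-x ts) :=
      Real.exp_lt_exp.2 (by linarith)
    rwa [Real.exp_log (by linarith)] at h2
  -- final contradiction
  have hEq := hx_eq ts hts_pos.le
  have hmain : (1 - δ) * (x ts * ∑ j, p j ts) < Real.exp (-x ts) * (x ts * ∑ j, p j ts) :=
    mul_lt_mul_of_pos_right hexp (mul_pos hxs_pos hS_pos)
  nlinarith [hsum_ge, hG_lt, hmain, hderiv_le, hEq]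
end

section
/- Assume (H0) with constants δ ∈ (0,1), ρ > 0, and (pc) with constant c > 0. Then there exists r₀ ∈ (0, ρ] such that for every r ∈ (0, r₀) there exist c₀ > 0 and η ∈ (0, r) with the property that Σ_{j=1}^k p_j(t)·f(y) − G(t,x) ≥ c₀ for all t ≥ 0 and all x, y ∈ [r−η, r]. -/
/-- Quantitative form of condition (3.4) of the paper: (H0) together with (pc)
yields `r₀ ∈ (0, ρ]` such that for every `r ∈ (0, r₀)` the quantity
`Σ_j p_j(t) f(y) − G(t,x)` is bounded below by a positive constant for `t ≥ 0`
and `x, y` close to `r` from below. -/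
theorem scalar_nicholson_uniform_gap
    (k : ℕ) (hk : 0 < k)
    (τ : Fin k → ℝ) (hτ : ∀ j, 0 < τ j)
    (d H : ℝ → ℝ → ℝ) (p : Fin k → ℝ → ℝ)
    (hd_cont : Continuous fun q : ℝ × ℝ => d q.1 q.2)
    (hH_cont : Continuous fun q : ℝ × ℝ => H q.1 q.2)
    (hp_cont : ∀ j, Continuous (p j))
    (hd_nonneg : ∀ t, 0 ≤ t → ∀ y, 0 ≤ y → 0 ≤ d t y)
    (hH_nonneg : ∀ t, 0 ≤ t → ∀ y, 0 ≤ y → 0 ≤ H t y)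
    (hp_nonneg : ∀ j, ∀ t, 0 ≤ t → 0 ≤ p j t)
    -- (H0)
    (δ ρ : ℝ) (hδ : δ ∈ Set.Ioo (0 : ℝ) 1) (hρ : 0 < ρ)
    (hH0 : ∀ t, 0 ≤ t → ∀ y, 0 < y → y ≤ ρ →
      d t y + H t y < (1 - δ) * y * ∑ j, p j t)
    -- (pc)
    (c : ℝ) (hc : 0 < c) (hpc : ∀ t, 0 ≤ t → c ≤ ∑ j, p j t) :
    ∃ r₀ ∈ Set.Ioc (0 : ℝ) ρ, ∀ r ∈ Set.Ioo (0 : ℝ) r₀,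
      ∃ c₀ : ℝ, 0 < c₀ ∧ ∃ η ∈ Set.Ioo (0 : ℝ) r,
        ∀ t, 0 ≤ t → ∀ x ∈ Set.Icc (r - η) r, ∀ y ∈ Set.Icc (r - η) r,
          c₀ ≤ (∑ j, p j t * (y * Real.exp (-y))) - (d t x + H t x) := by
  obtain ⟨hδ0, hδ1⟩ := hδ
  refine ⟨min ρ (δ / 2), ⟨lt_min hρ (by linarith), min_le_left _ _⟩, ?_⟩
  rintro r ⟨hr0, hrlt⟩
  have hrρ : r ≤ ρ := le_of_lt (lt_of_lt_of_le hrlt (min_le_left _ _))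
  have hrδ : r < δ / 2 := lt_of_lt_of_le hrlt (min_le_right _ _)
  refine ⟨c * r * δ / 4, by positivity, r * δ / 4, ⟨by positivity, by nlinarith⟩, ?_⟩
  intro t ht x hx y hy
  obtain ⟨hx1, hx2⟩ := hx; obtain ⟨hy1, hy2⟩ := hy
  have hx0 : 0 < x := by nlinarith
  have hy0 : 0 < y := by nlinarith
  have hS : c ≤ ∑ j, p j t := hpc t ht
  have hG : d t x + H t x < (1 - δ) * x * ∑ j, p j t :=
    hH0 t ht x hx0 (le_trans hx2 hrρ)
  have hexp : 1 - y ≤ Real.exp (-y) := by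
    have := Real.add_one_le_exp (-y); linarith
  have hsum : ∑ j, p j t * (y * Real.exp (-y)) = (∑ j, p j t) * (y * Real.exp (-y)) := by
    rw [Finset.sum_mul]
  rw [hsum]
  set S := ∑ j, p j t with hSdef
  have hS0 : 0 < S := lt_of_lt_of_le hc hS
  have h2 : y * (1 - δ / 2) ≤ y * Real.exp (-y) := by
    have h : 1 - δ / 2 ≤ Real.exp (-y) := by nlinarith
    nlinarith
  have h3 : r * δ / 4 ≤ y * (1 - δ / 2) - (1 - δ) * x := by nlinarith
  nlinarith [mul_le_mul_of_nonneg_left h2 hS0.le,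
    mul_le_mul_of_nonneg_left h3 hS0.le,
    mul_le_mul_of_nonneg_right hS (by positivity : (0:ℝ) ≤ r * δ / 4)]
end

section
/- Assume (Hk0), (H0) and (pc). Then the positive solutions of the scalar Nicholson equation are uniformly persistent: there exists ε > 0 such that every positive solution x satisfies liminf_{t→∞} x(t) > ε. -/
open Real Filter Set

-- f = y e^{-y} monotone on [0,1]
lemma fNich_mono : ∀ v w : ℝ, 0 ≤ v → v ≤ w → w ≤ 1 → v * Real.exp (-v) ≤ w * Real.exp (-w) := by
  have h : MonotoneOn (fun y : ℝ => y * Real.exp (-y)) (Set.Icc 0 1) := by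
    apply monotoneOn_of_deriv_nonneg (convex_Icc 0 1)
    · exact (continuous_id.mul (Real.continuous_exp.comp continuous_neg)).continuousOn
    · intro y hy
      exact ((differentiable_id.mul (Real.differentiable_exp.comp differentiable_neg)) y).differentiableWithinAt
    · intro y hy
      rw [interior_Icc] at hy
      have hd : HasDerivAt (fun y : ℝ => y * Real.exp (-y)) (1 * Real.exp (-y) + y * (Real.exp (-y) * (-1))) y := by
        exact (hasDerivAt_id y).mul ((Real.hasDerivAt_exp (-y)).comp y ((hasDerivAt_id y).neg))
      rw [hd.deriv]
      have := Real.exp_pos (-y)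
      nlinarith [hy.1, hy.2]
  intro v w hv hvw hw
  exact h ⟨hv, by linarith⟩ ⟨by linarith, hw⟩ hvw

-- derivative sign at approximate right minimum
lemma deriv_nonpos_of_right (x : ℝ → ℝ) (t : ℝ) (hx : DifferentiableAt ℝ x t)
    (h : ∀ ε > 0, ∃ s, t < s ∧ s < t + ε ∧ x s < x t) : deriv x t ≤ 0 := by
  by_contra hpos
  push_neg at hpos
  have hs := hx.hasDerivAt
  rw [hasDerivAt_iff_tendsto_slope] at hs
  have hs' : Filter.Tendsto (slope x t) (nhdsWithin t (Set.Ioi t)) (nhds (deriv x t)) :=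
    hs.mono_left (nhdsWithin_mono t (fun y hy => ne_of_gt hy))
  have hev : ∀ᶠ s in nhdsWithin t (Set.Ioi t), 0 < slope x t s :=
    hs' (Ioi_mem_nhds hpos)
  rw [Filter.eventually_iff, mem_nhdsGT_iff_exists_Ioo_subset] at hev
  obtain ⟨u, hu, hsub⟩ := hev
  obtain ⟨s, hs1, hs2, hs3⟩ := h (u - t) (by simp only [Set.mem_Ioi] at hu; linarith)
  have hmem : 0 < slope x t s := hsub ⟨hs1, by linarith⟩
  rw [slope_def_field] at hmem
  have : (x s - x t) / (s - t) < 0 := div_neg_of_neg_of_pos (by linarith) (by linarith)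
  linarith

-- growth from derivative lower bound
lemma grow_of_deriv_ge (x : ℝ → ℝ) (C s₀ s₁ : ℝ) (hx : Continuous x)
    (hs : s₀ ≤ s₁)
    (hdiff : ∀ t ∈ Set.Icc s₀ s₁, DifferentiableAt ℝ x t)
    (hderiv : ∀ t ∈ Set.Icc s₀ s₁, C ≤ deriv x t) :
    x s₀ + C * (s₁ - s₀) ≤ x s₁ := by
  have h : MonotoneOn (fun t => x t - C * t) (Set.Icc s₀ s₁) := by
    apply monotoneOn_of_deriv_nonneg (convex_Icc s₀ s₁)
    · exact (hx.sub (continuous_const.mul continuous_id)).continuousOn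
    · intro y hy
      rw [interior_Icc] at hy
      exact ((hdiff y ⟨le_of_lt hy.1, le_of_lt hy.2⟩).sub ((differentiable_const C).mul differentiable_id y)).differentiableWithinAt
    · intro y hy
      rw [interior_Icc] at hy
      have hy' : y ∈ Set.Icc s₀ s₁ := ⟨le_of_lt hy.1, le_of_lt hy.2⟩
      have hd : HasDerivAt (fun t => x t - C * t) (deriv x y - C * 1) y :=
        (hdiff y hy').hasDerivAt.sub ((hasDerivAt_id y).const_mul C)
      rw [hd.deriv]
      have := hderiv y hy'
      linarith
  have := h (Set.left_mem_Icc.mpr hs) (Set.right_mem_Icc.mpr hs) hs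
  simp only at this
  linarith

-- exponential lower bound lemma
lemma expGrowthBound (x : ℝ → ℝ) (k₀ : ℝ) (hx : Continuous x)
    (hdiff : ∀ t, (0:ℝ) ≤ t → DifferentiableAt ℝ x t)
    (hderiv : ∀ t, (0:ℝ) ≤ t → -(k₀ * x t) ≤ deriv x t) :
    ∀ s t : ℝ, 0 ≤ s → s ≤ t → x s * Real.exp (k₀ * s) ≤ x t * Real.exp (k₀ * t) := by
  have h : MonotoneOn (fun t => x t * Real.exp (k₀ * t)) (Set.Ici 0) := by
    apply monotoneOn_of_deriv_nonneg (convex_Ici 0)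
    · exact (hx.mul (Real.continuous_exp.comp (continuous_const.mul continuous_id))).continuousOn
    · intro y hy
      rw [interior_Ici] at hy
      exact ((hdiff y (le_of_lt hy)).mul (((Real.hasDerivAt_exp (k₀*y)).comp y ((hasDerivAt_id y).const_mul k₀)).differentiableAt)).differentiableWithinAt
    · intro y hy
      rw [interior_Ici] at hy
      have hexp : HasDerivAt (fun t : ℝ => Real.exp (k₀ * t)) (Real.exp (k₀ * y) * (k₀ * 1)) y :=
        (Real.hasDerivAt_exp (k₀*y)).comp y ((hasDerivAt_id y).const_mul k₀)
      have hd : HasDerivAt (fun t => x t * Real.exp (k₀ * t))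
          (deriv x y * Real.exp (k₀ * y) + x y * (Real.exp (k₀ * y) * (k₀ * 1))) y :=
        (hdiff y (le_of_lt hy)).hasDerivAt.mul hexp
      rw [hd.deriv]
      have h1 := hderiv y (le_of_lt hy)
      have h2 := Real.exp_pos (k₀ * y)
      nlinarith
  intro s t hs hst
  exact h (Set.mem_Ici.mpr hs) (Set.mem_Ici.mpr (le_trans hs hst)) hst

set_option maxHeartbeats 1000000 in
/-- Theorem 3.3 of the paper: under (Hk0), (H0) and (pc) the positive solutions of
the scalar Nicholson equation are uniformly persistent: there is `ε > 0` such that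
every positive solution satisfies `liminf_{t→∞} x(t) > ε` (liminf in the extended
reals). -/
theorem scalar_nicholson_uniform_persistence
    (k : ℕ) (hk : 0 < k)
    (τ : Fin k → ℝ) (hτ : ∀ j, 0 < τ j)
    (τs : ℝ) (hτs_ub : ∀ j, τ j ≤ τs) (hτs_mem : ∃ j, τ j = τs)
    (d H : ℝ → ℝ → ℝ) (p : Fin k → ℝ → ℝ)
    (hd_cont : Continuous fun q : ℝ × ℝ => d q.1 q.2)
    (hH_cont : Continuous fun q : ℝ × ℝ => H q.1 q.2)
    (hp_cont : ∀ j, Continuous (p j))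
    (hd_nonneg : ∀ t, 0 ≤ t → ∀ y, 0 ≤ y → 0 ≤ d t y)
    (hH_nonneg : ∀ t, 0 ≤ t → ∀ y, 0 ≤ y → 0 ≤ H t y)
    (hp_nonneg : ∀ j, ∀ t, 0 ≤ t → 0 ≤ p j t)
    -- (Hk0)
    (hk0 : ∃ k₀ : ℝ, 0 < k₀ ∧ ∀ t, 0 ≤ t → ∀ y, 0 ≤ y → d t y + H t y ≤ k₀ * y)
    -- (H0)
    (hH0 : ∃ δ ∈ Set.Ioo (0 : ℝ) 1, ∃ ρ : ℝ, 0 < ρ ∧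
      ∀ t, 0 ≤ t → ∀ y, 0 < y → y ≤ ρ →
        d t y + H t y < (1 - δ) * y * ∑ j, p j t)
    -- (pc)
    (hpc : ∃ c : ℝ, 0 < c ∧ ∀ t, 0 ≤ t → c ≤ ∑ j, p j t) :
    ∃ ε : ℝ, 0 < ε ∧
      ∀ x : ℝ → ℝ,
        Continuous x →
        (∀ t, -τs ≤ t → 0 < x t) →
        (∀ t, 0 ≤ t → DifferentiableAt ℝ x t) →
        (∀ t, 0 ≤ t →
          deriv x t = -d t (x t)
            + ∑ j, p j t * (x (t - τ j) * Real.exp (-x (t - τ j)))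
            - H t (x t)) →
        (ε : EReal) < Filter.liminf (fun t => (x t : EReal)) Filter.atTop := by
  obtain ⟨k₀, hk₀, hG⟩ := hk0
  obtain ⟨δ, ⟨hδ0, hδ1⟩, ρ, hρ, hGρ⟩ := hH0
  obtain ⟨c, hc, hpcc⟩ := hpc
  obtain ⟨j₀, hj₀⟩ := hτs_mem
  have hτs : 0 < τs := hj₀ ▸ hτ j₀
  set E := Real.exp (k₀ * τs) with hE
  have hE1 : 1 ≤ E := Real.one_le_exp (by positivity)
  set L := -Real.log (1 - δ) with hL
  have hL0 : 0 < L := by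
    have : Real.log (1 - δ) < 0 := Real.log_neg (by linarith) (by linarith)
    simp only [hL]; linarith
  set M := min ((1-δ) * min ρ (1/E)) (L/2) with hM
  have hM0 : 0 < M := by
    apply lt_min
    · exact mul_pos (by linarith) (lt_min hρ (by positivity))
    · linarith
  have hMρ : M ≤ ρ := by
    calc M ≤ (1-δ) * min ρ (1/E) := min_le_left _ _
    _ ≤ 1 * ρ := by
        apply mul_le_mul (by linarith) (min_le_left _ _) (le_min hρ.le (by positivity)) zero_le_one
    _ = ρ := one_mul ρ
  have hME : M * E ≤ 1 := by
    have h1 : M ≤ 1/E := by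
      calc M ≤ (1-δ) * min ρ (1/E) := min_le_left _ _
      _ ≤ 1 * (1/E) := mul_le_mul (by linarith) (min_le_right _ _) (le_min hρ.le (by positivity)) zero_le_one
      _ = 1/E := one_mul _
    calc M * E ≤ (1/E) * E := mul_le_mul_of_nonneg_right h1 (by positivity)
    _ = 1 := by field_simp
  have hML : M < L := lt_of_le_of_lt (min_le_right _ _) (by linarith)
  have hexpM : 1 - δ < Real.exp (-M) := by
    have h1 : Real.log (1 - δ) < -M := by rw [hL] at hML; linarith
    calc 1 - δ = Real.exp (Real.log (1 - δ)) := (Real.exp_log (by linarith)).symm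
    _ < Real.exp (-M) := Real.exp_lt_exp.mpr h1
  set lam := Real.exp (-M) / (1-δ) with hlam
  have hlamδ : (1-δ) * lam = Real.exp (-M) := by
    rw [hlam, mul_comm, div_mul_cancel₀ _ (by linarith : (1-δ) ≠ 0)]
  have hlam1 : 1 < lam := by
    rw [hlam, lt_div_iff₀ (by linarith)]; linarith
  set lam' := (1+lam)/2 with hlam'
  have hlam'1 : 1 < lam' := by rw [hlam']; linarith
  have hlam'lt : lam' < lam := by rw [hlam']; linarith
  set γ := c * (1-δ) * (lam - lam') with hγ
  have hγ0 : 0 < γ := by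
    apply mul_pos (mul_pos hc (by linarith)); linarith
  refine ⟨M/2, by positivity, ?_⟩
  intro x hxc hxpos hxdiff hxeq
  -- positivity of delayed arguments
  have hdelay_pos : ∀ (j : Fin k) t, 0 ≤ t → 0 < x (t - τ j) := by
    intro j t ht
    exact hxpos _ (by have := hτs_ub j; linarith)
  have hsum_nonneg : ∀ t, 0 ≤ t → 0 ≤ ∑ j, p j t := fun t ht =>
    Finset.sum_nonneg fun j _ => hp_nonneg j t ht
  have hsumf_nonneg : ∀ t, 0 ≤ t →
      0 ≤ ∑ j, p j t * (x (t - τ j) * Real.exp (-x (t - τ j))) := by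
    intro t ht
    apply Finset.sum_nonneg
    intro j _
    have h1 := hdelay_pos j t ht
    have h2 := Real.exp_pos (-x (t - τ j))
    have h3 := hp_nonneg j t ht
    have : 0 ≤ x (t - τ j) * Real.exp (-x (t - τ j)) := by positivity
    exact mul_nonneg h3 this
  -- Lemma A
  have hexpG : ∀ s t : ℝ, 0 ≤ s → s ≤ t →
      x s * Real.exp (k₀ * s) ≤ x t * Real.exp (k₀ * t) := by
    apply expGrowthBound x k₀ hxc hxdiff
    intro t ht
    rw [hxeq t ht]
    have h1 := hG t ht (x t) (hxpos t (by linarith)).le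
    have h2 := hsumf_nonneg t ht
    linarith
  -- upper bound on delayed values
  have hupper : ∀ (j : Fin k) t, τs ≤ t → x (t - τ j) ≤ x t * E := by
    intro j t ht
    have hτj := hτ j
    have hτjs := hτs_ub j
    have h1 : (0:ℝ) ≤ t - τ j := by linarith
    have h2 := hexpG (t - τ j) t h1 (by linarith)
    have h3 : Real.exp (k₀ * t) = Real.exp (k₀ * (t - τ j)) * Real.exp (k₀ * τ j) := by
      rw [← Real.exp_add]; ring_nf
    have h4 : Real.exp (k₀ * τ j) ≤ E :=
      Real.exp_le_exp.mpr (mul_le_mul_of_nonneg_left hτjs hk₀.le)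
    have h5 := Real.exp_pos (k₀ * (t - τ j))
    have h6 := hxpos t (by linarith)
    have h7 : x (t - τ j) * Real.exp (k₀ * (t - τ j)) ≤
        (x t * Real.exp (k₀ * τ j)) * Real.exp (k₀ * (t - τ j)) := by
      have h9 : x t * (Real.exp (k₀ * (t - τ j)) * Real.exp (k₀ * τ j)) =
          (x t * Real.exp (k₀ * τ j)) * Real.exp (k₀ * (t - τ j)) := by ring
      rw [h3, h9] at h2; exact h2
    have h8 : x (t - τ j) ≤ x t * Real.exp (k₀ * τ j) := le_of_mul_le_mul_right h7 h5
    calc x (t - τ j) ≤ x t * Real.exp (k₀ * τ j) := h8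
    _ ≤ x t * E := mul_le_mul_of_nonneg_left h4 h6.le
  -- core "stay above" lemma
  have core : ∀ m η a : ℝ, 0 < m → m ≤ η → η ≤ M →
      (1-δ) * η ≤ m * Real.exp (-m) → τs ≤ a →
      (∀ s, a - τs ≤ s → s ≤ a → m ≤ x s) → η ≤ x a →
      ∀ t, a ≤ t → η ≤ x t := by
    intro m η a hm hmη hηM hfm hτsa hwin hxa t hat
    by_contra hlt
    push_neg at hlt
    set S := {s : ℝ | a ≤ s ∧ x s < η} with hS
    have hSne : S.Nonempty := ⟨t, hat, hlt⟩
    have hSbdd : BddBelow S := ⟨a, fun s hs => hs.1⟩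
    set t₂ := sInf S with ht₂
    have ht₂a : a ≤ t₂ := le_csInf hSne (fun s hs => hs.1)
    have hbefore : ∀ s, a ≤ s → s < t₂ → η ≤ x s := by
      intro s h1 h2
      by_contra h
      push_neg at h
      exact absurd (csInf_le hSbdd ⟨h1, h⟩) (not_le.mpr h2)
    have hxt₂_ge : η ≤ x t₂ := by
      rcases eq_or_lt_of_le ht₂a with h | h
      · rw [← h]; exact hxa
      · by_contra hcon
        push_neg at hcon
        have hev : ∀ᶠ s in nhds t₂, x s < η := hxc.continuousAt (Iio_mem_nhds hcon)
        have hev' : ∀ᶠ s in nhdsWithin t₂ (Set.Iio t₂),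
            (x s < η ∧ a < s) ∧ s ∈ Set.Iio t₂ :=
          ((hev.filter_mono nhdsWithin_le_nhds).and
            (eventually_nhdsWithin_of_eventually_nhds (eventually_gt_nhds h))).and
            eventually_mem_nhdsWithin
        obtain ⟨s, ⟨hs1, hs2⟩, hs3⟩ := hev'.exists
        exact absurd (csInf_le hSbdd ⟨hs2.le, hs1⟩) (not_le.mpr hs3)
    have hfreq : ∀ ε > 0, ∃ s, t₂ < s ∧ s < t₂ + ε ∧ x s < η := by
      intro ε hε
      have : ∃ s ∈ S, s < t₂ + ε := by
        by_contra h
        push_neg at h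
        have : t₂ + ε ≤ t₂ := le_csInf hSne h
        linarith
      obtain ⟨s, hsS, hslt⟩ := this
      have hst₂ : t₂ ≤ s := csInf_le hSbdd hsS
      have hne : t₂ < s := by
        rcases eq_or_lt_of_le hst₂ with h | h
        · exfalso; rw [← h] at hsS; exact absurd hxt₂_ge (not_le.mpr hsS.2)
        · exact h
      exact ⟨s, hne, hslt, hsS.2⟩
    have hxt₂_le : x t₂ ≤ η := by
      by_contra h
      push_neg at h
      have hev : ∀ᶠ s in nhds t₂, η < x s := hxc.continuousAt (Ioi_mem_nhds h)
      rw [Metric.eventually_nhds_iff] at hev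
      obtain ⟨ε', hε', hball⟩ := hev
      obtain ⟨s, hs1, hs2, hs3⟩ := hfreq ε' hε'
      have : η < x s := hball (by rw [Real.dist_eq, abs_lt]; constructor <;> linarith)
      linarith
    have hxt₂ : x t₂ = η := le_antisymm hxt₂_le hxt₂_ge
    have ht₂0 : (0:ℝ) ≤ t₂ := by linarith
    have hder_le : deriv x t₂ ≤ 0 := by
      apply deriv_nonpos_of_right x t₂ (hxdiff t₂ ht₂0)
      intro ε hε
      obtain ⟨s, h1, h2, h3⟩ := hfreq ε hε
      exact ⟨s, h1, h2, by rw [hxt₂]; exact h3⟩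
    -- the differential equation at t₂ gives a contradiction
    have heq := hxeq t₂ ht₂0
    have hH0app : d t₂ (x t₂) + H t₂ (x t₂) < (1-δ) * η * ∑ j, p j t₂ := by
      rw [hxt₂]
      exact hGρ t₂ ht₂0 η (by linarith) (by linarith)
    have hterm : ∀ j : Fin k, p j t₂ * ((1-δ) * η) ≤
        p j t₂ * (x (t₂ - τ j) * Real.exp (-x (t₂ - τ j))) := by
      intro j
      apply mul_le_mul_of_nonneg_left _ (hp_nonneg j t₂ ht₂0)
      have hτj := hτ j
      have hτjs := hτs_ub j
      -- lower bound m ≤ x (t₂ - τ j)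
      have hlow : m ≤ x (t₂ - τ j) := by
        rcases le_or_gt (t₂ - τ j) a with h | h
        · exact hwin _ (by linarith) h
        · exact le_trans hmη (hbefore _ h.le (by linarith))
      -- upper bound x (t₂ - τ j) ≤ 1
      have hup : x (t₂ - τ j) ≤ 1 := by
        have h1 := hupper j t₂ (by linarith)
        rw [hxt₂] at h1
        calc x (t₂ - τ j) ≤ η * E := h1
        _ ≤ M * E := mul_le_mul_of_nonneg_right hηM (by positivity)
        _ ≤ 1 := hME
      calc (1-δ) * η ≤ m * Real.exp (-m) := hfm
      _ ≤ x (t₂ - τ j) * Real.exp (-x (t₂ - τ j)) := fNich_mono m _ hm.le hlow hup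
    have hsumge : (1-δ) * η * ∑ j, p j t₂ ≤
        ∑ j, p j t₂ * (x (t₂ - τ j) * Real.exp (-x (t₂ - τ j))) := by
      calc (1-δ) * η * ∑ j, p j t₂ = ∑ j, p j t₂ * ((1-δ) * η) := by
            rw [Finset.mul_sum]; exact Finset.sum_congr rfl (fun j _ => by ring)
      _ ≤ _ := Finset.sum_le_sum (fun j _ => hterm j)
    linarith
  -- base level from the minimum on [τs, 2τs]
  have hne : (Set.Icc τs (2*τs)).Nonempty := ⟨τs, le_refl _, by linarith⟩
  obtain ⟨t₀, ht₀mem, ht₀min'⟩ := isCompact_Icc.exists_isMinOn hne hxc.continuousOn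
  have ht₀min := isMinOn_iff.mp ht₀min'
  have hxt₀pos : 0 < x t₀ := hxpos t₀ (by have := ht₀mem.1; linarith)
  set μ₀ := min M (x t₀) with hμ₀
  have hμ₀0 : 0 < μ₀ := lt_min hM0 hxt₀pos
  have hμ₀M : μ₀ ≤ M := min_le_left _ _
  have hfcond : ∀ m η : ℝ, 0 < m → m ≤ M → (1-δ) * η ≤ (1-δ) * lam * m →
      (1-δ) * η ≤ m * Real.exp (-m) := by
    intro m η hm hmM hle
    have h1 : Real.exp (-M) ≤ Real.exp (-m) := Real.exp_le_exp.mpr (by linarith)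
    calc (1-δ) * η ≤ (1-δ) * lam * m := hle
    _ = Real.exp (-M) * m := by rw [hlamδ]
    _ ≤ Real.exp (-m) * m := mul_le_mul_of_nonneg_right h1 hm.le
    _ = m * Real.exp (-m) := mul_comm _ _
  have base : ∀ t, 2*τs ≤ t → μ₀ ≤ x t := by
    apply core μ₀ μ₀ (2*τs) hμ₀0 le_rfl hμ₀M
    · apply hfcond μ₀ μ₀ hμ₀0 hμ₀M
      have h0 : 0 ≤ (1-δ)*μ₀ := mul_nonneg (by linarith) hμ₀0.le
      have h1 : 1*((1-δ)*μ₀) ≤ lam*((1-δ)*μ₀) := mul_le_mul_of_nonneg_right hlam1.le h0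
      have h2 : (1-δ)*lam*μ₀ = lam*((1-δ)*μ₀) := by ring
      rw [h2]; linarith
    · linarith
    · intro s h1 h2
      exact le_trans (min_le_right _ _) (ht₀min s ⟨by linarith, by linarith⟩)
    · exact le_trans (min_le_right _ _) (ht₀min (2*τs) ⟨by linarith, by linarith⟩)
  -- step lemma
  have step : ∀ m b : ℝ, 0 < m → m ≤ M → (∀ t, b ≤ t → m ≤ x t) →
      ∃ b', ∀ t, b' ≤ t → min (lam' * m) M ≤ x t := by
    intro m b hm hmM hb
    set a := max b τs with ha
    have haτs : τs ≤ a := le_max_right _ _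
    have hab : b ≤ a := le_max_left _ _
    have hxa : ∀ t, a ≤ t → m ≤ x t := fun t ht => hb t (by linarith)
    set η := min (lam' * m) M with hη
    have hmη : m ≤ η := by
      apply le_min _ hmM
      have h1 : 1*m ≤ lam'*m := mul_le_mul_of_nonneg_right hlam'1.le hm.le
      linarith
    have hηM : η ≤ M := min_le_right _ _
    have hηlam' : η ≤ lam' * m := min_le_left _ _
    have hfη : (1-δ) * η ≤ m * Real.exp (-m) := by
      apply hfcond m η hm hmM
      have h1 : η ≤ lam * m :=
        le_trans hηlam' (mul_le_mul_of_nonneg_right hlam'lt.le hm.le)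
      have h2 : (1-δ)*η ≤ (1-δ)*(lam*m) := mul_le_mul_of_nonneg_left h1 (by linarith)
      have h3 : (1-δ)*(lam*m) = (1-δ)*lam*m := by ring
      linarith
    set T := (lam' - 1)/γ with hT
    have hT0 : 0 < T := div_pos (by linarith) hγ0
    -- find a point t* in [a+τs, a+τs+T] where x ≥ η
    have hstar : ∃ t', a + τs ≤ t' ∧ η ≤ x t' := by
      by_contra hcon
      push_neg at hcon
      have hlow : ∀ t', t' ∈ Set.Icc (a + τs) (a + τs + T) → γ * m ≤ deriv x t' := by
        intro t' ht'
        have ht'1 : a + τs ≤ t' := ht'.1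
        have ht'0 : (0:ℝ) ≤ t' := by linarith
        have hxt' : x t' < η := hcon t' ht'1
        have hxt'pos : 0 < x t' := hxpos t' (by linarith)
        rw [hxeq t' ht'0]
        have hH0app : d t' (x t') + H t' (x t') < (1-δ) * x t' * ∑ j, p j t' :=
          hGρ t' ht'0 (x t') hxt'pos (by linarith)
        have hterm : ∀ j : Fin k, p j t' * ((1-δ) * lam * m) ≤
            p j t' * (x (t' - τ j) * Real.exp (-x (t' - τ j))) := by
          intro j
          apply mul_le_mul_of_nonneg_left _ (hp_nonneg j t' ht'0)
          have hτj := hτ j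
          have hτjs := hτs_ub j
          have hlowd : m ≤ x (t' - τ j) := hxa _ (by linarith)
          have hupd : x (t' - τ j) ≤ 1 := by
            have h1 := hupper j t' (by linarith)
            calc x (t' - τ j) ≤ x t' * E := h1
            _ ≤ M * E := mul_le_mul_of_nonneg_right (by linarith) (by positivity)
            _ ≤ 1 := hME
          calc (1-δ) * lam * m = Real.exp (-M) * m := by rw [hlamδ]
          _ ≤ Real.exp (-m) * m :=
              mul_le_mul_of_nonneg_right (Real.exp_le_exp.mpr (by linarith)) hm.le
          _ = m * Real.exp (-m) := mul_comm _ _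
          _ ≤ x (t' - τ j) * Real.exp (-x (t' - τ j)) := fNich_mono m _ hm.le hlowd hupd
        have hsumge : (1-δ) * lam * m * ∑ j, p j t' ≤
            ∑ j, p j t' * (x (t' - τ j) * Real.exp (-x (t' - τ j))) := by
          calc (1-δ) * lam * m * ∑ j, p j t' = ∑ j, p j t' * ((1-δ) * lam * m) := by
                rw [Finset.mul_sum]; exact Finset.sum_congr rfl (fun j _ => by ring)
          _ ≤ _ := Finset.sum_le_sum (fun j _ => hterm j)
        have hpc' := hpcc t' ht'0
        have hsp := hsum_nonneg t' ht'0
        -- deriv ≥ (1-δ)(lam m - x t') Σp ≥ (1-δ)(lam - lam') m c = γ m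
        have hxlt : x t' < lam' * m := lt_of_lt_of_le hxt' hηlam'
        have h1 : (1-δ) * (lam - lam') * m ≤ (1-δ) * (lam * m - x t') := by
          have ha : (lam - lam') * m ≤ lam * m - x t' := by
            have : lam'*m - lam*m ≤ lam'*m - lam*m := le_rfl
            have hb : (lam - lam') * m = lam*m - lam'*m := by ring
            linarith
          have hc := mul_le_mul_of_nonneg_left ha (by linarith : (0:ℝ) ≤ 1-δ)
          have hd : (1-δ) * ((lam - lam') * m) = (1-δ) * (lam - lam') * m := by ring
          linarith
        have h3 : 0 < (1-δ) * (lam - lam') * m :=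
          mul_pos (mul_pos (by linarith) (by linarith)) hm
        have h2 : (1-δ) * (lam - lam') * m * c ≤ (1-δ) * (lam * m - x t') * ∑ j, p j t' := by
          calc (1-δ) * (lam - lam') * m * c ≤ (1-δ) * (lam - lam') * m * ∑ j, p j t' :=
                mul_le_mul_of_nonneg_left hpc' h3.le
          _ ≤ (1-δ) * (lam * m - x t') * ∑ j, p j t' :=
                mul_le_mul_of_nonneg_right h1 hsp
        have hγm : γ * m = (1-δ) * (lam - lam') * m * c := by rw [hγ]; ring
        have hring : (1-δ) * lam * m * ∑ j, p j t' - (1-δ) * x t' * ∑ j, p j t'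
            = (1-δ) * (lam * m - x t') * ∑ j, p j t' := by ring
        linarith
      have hgrow := grow_of_deriv_ge x (γ * m) (a + τs) (a + τs + T) hxc (by linarith)
        (fun t' ht' => hxdiff t' (by have := ht'.1; linarith)) hlow
      have h1 : x (a + τs) ≥ m := hxa _ (by linarith)
      have h2 : x (a + τs + T) < η := hcon _ (by linarith)
      have h3 : γ * m * T = (lam' - 1) * m := by
        rw [hT]; field_simp
      have h4 : η ≤ lam' * m := hηlam'
      have h5 : a + τs + T - (a + τs) = T := by ring
      rw [h5] at hgrow
      have h6 : γ * m * T = γ * m * T := rfl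
      have h7 : (lam' - 1) * m = lam' * m - m := by ring
      linarith
    obtain ⟨t', ht'1, ht'2⟩ := hstar
    refine ⟨t', ?_⟩
    apply core m η t' hm hmη hηM hfη (by linarith)
    · intro s h1 h2
      exact hxa s (by linarith)
    · exact ht'2
  -- iterate
  have iter : ∀ n : ℕ, ∃ b, ∀ t, b ≤ t → min (lam'^n * μ₀) M ≤ x t := by
    intro n
    induction n with
    | zero =>
      refine ⟨2*τs, fun t ht => ?_⟩
      have : min (lam'^0 * μ₀) M = μ₀ := by
        rw [pow_zero, one_mul]
        exact min_eq_left hμ₀M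
      rw [this]
      exact base t ht
    | succ n ih =>
      obtain ⟨b, hbb⟩ := ih
      set m := min (lam'^n * μ₀) M with hm'
      have hm0 : 0 < m := by
        apply lt_min _ hM0
        positivity
      obtain ⟨b', hb'⟩ := step m b hm0 (min_le_right _ _) hbb
      refine ⟨b', fun t ht => ?_⟩
      have h1 := hb' t ht
      have h2 : min (lam'^(n+1) * μ₀) M ≤ min (lam' * m) M := by
        apply le_min _ (min_le_right _ _)
        rcases min_cases (lam'^n * μ₀) M with ⟨heq', _⟩ | ⟨heq', hlt⟩
        · calc min (lam'^(n+1) * μ₀) M ≤ lam'^(n+1) * μ₀ := min_le_left _ _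
          _ = lam' * (lam'^n * μ₀) := by ring
          _ = lam' * m := by rw [hm', heq']
        · calc min (lam'^(n+1) * μ₀) M ≤ M := min_le_right _ _
          _ ≤ lam' * M := by
              have h3 : 1*M ≤ lam'*M := mul_le_mul_of_nonneg_right hlam'1.le hM0.le
              linarith
          _ = lam' * m := by rw [hm', heq']
      linarith
  -- conclude
  obtain ⟨N, hN⟩ := pow_unbounded_of_one_lt (M / μ₀) hlam'1
  have hNM : M ≤ lam'^N * μ₀ := by
    rw [div_lt_iff₀ hμ₀0] at hN
    linarith
  obtain ⟨b, hbfin⟩ := iter N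
  have hfin : ∀ t, b ≤ t → M ≤ x t := by
    intro t ht
    have := hbfin t ht
    rwa [min_eq_right hNM] at this
  have hliminf : (M : EReal) ≤ Filter.liminf (fun t => (x t : EReal)) Filter.atTop := by
    apply Filter.le_liminf_of_le
      (Filter.isCoboundedUnder_ge_of_le Filter.atTop (f := fun t => (x t : EReal))
        (x := (⊤ : EReal)) (fun t => le_top))
    filter_upwards [Filter.eventually_ge_atTop b] with t ht
    exact_mod_cast hfin t ht
  refine lt_of_lt_of_le ?_ hliminf
  exact_mod_cast (by linarith : M/2 < M)
end

section
/- Assume (Hk0-sys) and (H0-sys). Then every positive solution of the N-dimensional Nicholson system is strongly persistent, i.e. liminf_{t→∞} ‖x(t)‖ > 0, where ‖·‖ is the Euclidean norm on ℝ^N. -/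
open Set Filter Topology

private lemma deriv_nonpos_of_left_min (f : ℝ → ℝ) (a L : ℝ) (hL : L < a)
    (hd : DifferentiableAt ℝ f a) (h : ∀ s, L ≤ s → s ≤ a → f a ≤ f s) :
    deriv f a ≤ 0 := by
  have hda := hd.hasDerivAt
  rw [hasDerivAt_iff_tendsto_slope] at hda
  have hmono : 𝓝[<] a ≤ 𝓝[≠] a :=
    nhdsWithin_mono _ fun s hs => ne_of_lt hs
  have htd : Tendsto (slope f a) (𝓝[<] a) (𝓝 (deriv f a)) := hda.mono_left hmono
  refine le_of_tendsto htd ?_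
  filter_upwards [Ioo_mem_nhdsLT_of_mem (Set.mem_Ioc.mpr ⟨hL, le_refl a⟩)] with s hs
  rw [slope_def_field]
  apply div_nonpos_of_nonneg_of_nonpos
  · have := h s hs.1.le hs.2.le
    linarith
  · linarith [hs.2]

set_option maxHeartbeats 1000000 in
/-- Proposition 3.4 of the paper: under (Hk0-sys) and (H0-sys) every positive
solution of the N-dimensional Nicholson system is strongly persistent, i.e.
`liminf_{t→∞} ‖x(t)‖ > 0` with the Euclidean norm (liminf in the extended
reals). -/
theorem nicholson_system_strong_persistence
    (N k : ℕ) (hN : 2 ≤ N) (hk : 0 < k)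
    (τ : Fin k → ℝ) (hτ : ∀ j, 0 < τ j)
    (τs : ℝ) (hτs_ub : ∀ j, τ j ≤ τs) (hτs_mem : ∃ j, τ j = τs)
    (d : Fin N → ℝ → ℝ → ℝ)
    (b : Fin N → Fin N → ℝ → ℝ → ℝ)
    (p : Fin N → Fin k → ℝ → ℝ)
    (H : Fin N → ℝ → (Fin N → ℝ) → ℝ)
    (hd_cont : ∀ i, Continuous fun q : ℝ × ℝ => d i q.1 q.2)
    (hb_cont : ∀ i l, l ≠ i → Continuous fun q : ℝ × ℝ => b i l q.1 q.2)
    (hp_cont : ∀ i j, Continuous (p i j))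
    (hH_cont : ∀ i, Continuous fun q : ℝ × (Fin N → ℝ) => H i q.1 q.2)
    (hd_nonneg : ∀ i t, 0 ≤ t → ∀ y, 0 ≤ y → 0 ≤ d i t y)
    (hb_nonneg : ∀ i l, l ≠ i → ∀ t, 0 ≤ t → ∀ y, 0 ≤ y → 0 ≤ b i l t y)
    (hp_nonneg : ∀ i j t, 0 ≤ t → 0 ≤ p i j t)
    (hH_nonneg : ∀ i t, 0 ≤ t → ∀ y : Fin N → ℝ, (∀ l, 0 ≤ y l) → 0 ≤ H i t y)
    -- (Hk0-sys)
    (hk0 : ∃ k₀ : ℝ, 0 < k₀ ∧ ∀ i t, 0 ≤ t → ∀ y : Fin N → ℝ, (∀ l, 0 ≤ y l) →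
      d i t (y i) + H i t y ≤ k₀ * y i)
    -- (H0-sys)
    (hH0 : ∃ δ ∈ Set.Ioo (0 : ℝ) 1, ∃ ρ : ℝ, 0 < ρ ∧
      ∀ t, 0 ≤ t → ∀ i, ∀ y : Fin N → ℝ, (∀ l, 0 < y l) → y i ≤ ρ →
        (∀ l, y i ≤ y l) →
        d i t (y i) + H i t y <
          y i * ((∑ l ∈ Finset.univ.erase i, b i l t (y l) / y l)
            + (1 - δ) * ∑ j, p i j t))
    -- positive solution
    (x : ℝ → Fin N → ℝ)
    (hx_cont : Continuous x)
    (hx_pos : ∀ t, -τs ≤ t → ∀ i, 0 < x t i)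
    (hx_diff : ∀ i, ∀ t, 0 ≤ t → DifferentiableAt ℝ (fun s => x s i) t)
    (hx_eq : ∀ i, ∀ t, 0 ≤ t →
      deriv (fun s => x s i) t =
        -d i t (x t i)
        + (∑ l ∈ Finset.univ.erase i, b i l t (x t l))
        + (∑ j, p i j t * (x (t - τ j) i * Real.exp (-x (t - τ j) i)))
        - H i t (x t)) :
    0 < Filter.liminf
      (fun t => ((Real.sqrt (∑ i, x t i ^ 2) : ℝ) : EReal)) Filter.atTop := by
  obtain ⟨k₀, hk₀pos, hk₀⟩ := hk0
  obtain ⟨δ, ⟨hδ0, hδ1⟩, ρ, hρ, hH0'⟩ := hH0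
  have hNpos : 0 < N := by omega
  haveI : NeZero N := ⟨by omega⟩
  have hτs_pos : 0 < τs := lt_of_lt_of_le (hτ ⟨0, hk⟩) (hτs_ub ⟨0, hk⟩)
  have hxc : ∀ i, Continuous fun s => x s i := fun i => (continuous_apply i).comp hx_cont
  have hx_nonneg : ∀ t, -τs ≤ t → ∀ i, 0 ≤ x t i := fun t ht i => (hx_pos t ht i).le
  -- derivative lower bound
  have hderiv_lb : ∀ i t, 0 ≤ t → -(k₀ * x t i) ≤ deriv (fun s => x s i) t := by
    intro i t ht
    rw [hx_eq i t ht]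
    have hb' : 0 ≤ ∑ l ∈ Finset.univ.erase i, b i l t (x t l) :=
      Finset.sum_nonneg fun l hl => hb_nonneg i l (Finset.ne_of_mem_erase hl) t ht _
        (hx_nonneg t (by linarith) l)
    have hp' : 0 ≤ ∑ j, p i j t * (x (t - τ j) i * Real.exp (-x (t - τ j) i)) := by
      refine Finset.sum_nonneg fun j _ => mul_nonneg (hp_nonneg i j t ht) (mul_nonneg ?_ (Real.exp_nonneg _))
      exact hx_nonneg (t - τ j) (by linarith [hτs_ub j]) i
    have hdH : d i t (x t i) + H i t (x t) ≤ k₀ * x t i :=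
      hk₀ i t ht (x t) (fun l => hx_nonneg t (by linarith) l)
    linarith
  -- Gronwall-type estimate
  have hgron : ∀ (i : Fin N) (s t : ℝ), 0 ≤ s → s ≤ t →
      x s i * Real.exp (k₀ * s) ≤ x t i * Real.exp (k₀ * t) := by
    intro i s t hs hst
    have hmono : MonotoneOn (fun u => x u i * Real.exp (k₀ * u)) (Ici (0:ℝ)) := by
      apply monotoneOn_of_deriv_nonneg (convex_Ici 0)
      · exact ((hxc i).mul (Real.continuous_exp.comp (continuous_const.mul continuous_id))).continuousOn
      · intro u hu
        rw [interior_Ici] at hu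
        exact ((hx_diff i u hu.le).mul
          (((hasDerivAt_id u).const_mul k₀).exp.differentiableAt)).differentiableWithinAt
      · intro u hu
        rw [interior_Ici] at hu
        have h1 : HasDerivAt (fun s => x s i) (deriv (fun s => x s i) u) u :=
          (hx_diff i u hu.le).hasDerivAt
        have h2 : HasDerivAt (fun s : ℝ => Real.exp (k₀ * s)) (Real.exp (k₀ * u) * (k₀ * 1)) u :=
          ((hasDerivAt_id u).const_mul k₀).exp
        rw [show deriv (fun u => x u i * Real.exp (k₀ * u)) u = _ from (h1.mul h2).deriv]
        have hlb := hderiv_lb i u hu.le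
        have he : (0:ℝ) < Real.exp (k₀ * u) := Real.exp_pos _
        have hkey : 0 ≤ (deriv (fun s => x s i) u + k₀ * x u i) * Real.exp (k₀ * u) :=
          mul_nonneg (by linarith) he.le
        nlinarith [hkey]
    exact hmono hs (le_trans hs hst) hst
  -- the pointwise minimum
  have hune : (Finset.univ : Finset (Fin N)).Nonempty := Finset.univ_nonempty
  set m : ℝ → ℝ := fun t => Finset.univ.inf' hune (fun i => x t i) with hm_def
  have hm_cont : Continuous m := Continuous.finset_inf'_apply hune (fun i _ => hxc i)
  have hm_le : ∀ t i, m t ≤ x t i := fun t i => Finset.inf'_le _ (Finset.mem_univ i)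
  have hm_pos : ∀ t, -τs ≤ t → 0 < m t := fun t ht =>
    (Finset.lt_inf'_iff hune).mpr fun i _ => hx_pos t ht i
  -- constants from the initial interval
  obtain ⟨t0, ht0mem, ht0min⟩ := (isCompact_Icc (a := -τs) (b := (0:ℝ))).exists_isMinOn
    ⟨0, by constructor <;> linarith⟩ hm_cont.continuousOn
  set M : ℝ → ℝ := fun t => Finset.univ.sup' hune (fun i => x t i) with hM_def
  have hM_cont : Continuous M := Continuous.finset_sup'_apply hune (fun i _ => hxc i)
  obtain ⟨t2, ht2mem, ht2max⟩ := (isCompact_Icc (a := -τs) (b := (0:ℝ))).exists_isMaxOn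
    ⟨0, by constructor <;> linarith⟩ hM_cont.continuousOn
  set S : ℝ := -Real.log (1 - δ) with hS_def
  have hS_pos : 0 < S := by
    have : Real.log (1 - δ) < 0 := Real.log_neg (by linarith) (by linarith)
    linarith
  have hexpS : Real.exp (-S) = 1 - δ := by
    rw [hS_def, neg_neg, Real.exp_log (by linarith)]
  set Z : ℝ := max (M t2) (ρ * Real.exp (k₀ * τs)) with hZ_def
  set κ : ℝ := S * Real.exp (-Z) with hκ_def
  have hκ_pos : 0 < κ := mul_pos hS_pos (Real.exp_pos _)
  set c : ℝ := min (min ρ S) (min κ (m t0)) with hc_def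
  have hm0_pos : 0 < m t0 := hm_pos t0 ht0mem.1
  have hc_pos : 0 < c := by
    apply lt_min (lt_min hρ hS_pos) (lt_min hκ_pos hm0_pos)
  have hcρ : c ≤ ρ := le_trans (min_le_left _ _) (min_le_left _ _)
  have hcS : c ≤ S := le_trans (min_le_left _ _) (min_le_right _ _)
  have hcκ : c ≤ κ := le_trans (min_le_right _ _) (min_le_left _ _)
  have hcm0 : c ≤ m t0 := le_trans (min_le_right _ _) (min_le_right _ _)
  -- main claim: m stays above c for t ≥ 0
  have key : ∀ T, 0 ≤ T → c ≤ m T := by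
    intro T hT
    by_contra hlt
    push_neg at hlt
    obtain ⟨t1, ht1mem, ht1min⟩ := (isCompact_Icc (a := -τs) (b := T)).exists_isMinOn
      ⟨T, by constructor <;> linarith⟩ hm_cont.continuousOn
    have ht1T : m t1 ≤ m T := ht1min ⟨by linarith, le_refl T⟩
    have ht1c : m t1 < c := lt_of_le_of_lt ht1T hlt
    have ht1pos : 0 < t1 := by
      by_contra hneg
      push_neg at hneg
      have h1 : m t0 ≤ m t1 := ht0min ⟨ht1mem.1, hneg⟩
      linarith
    obtain ⟨i, -, hi⟩ := Finset.exists_mem_eq_inf' hune (fun i => x t1 i)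
    have hyi : x t1 i = m t1 := hi.symm
    have hyile : ∀ l, x t1 i ≤ x t1 l := fun l => hyi ▸ hm_le t1 l
    have hyi_pos : 0 < x t1 i := hx_pos t1 (by linarith) i
    have hmin_i : ∀ s, -τs ≤ s → s ≤ t1 → x t1 i ≤ x s i := by
      intro s h1 h2
      have : m t1 ≤ m s := ht1min ⟨h1, le_trans h2 ht1mem.2⟩
      calc x t1 i = m t1 := hyi
        _ ≤ m s := this
        _ ≤ x s i := hm_le s i
    have hd0 : deriv (fun s => x s i) t1 ≤ 0 :=
      deriv_nonpos_of_left_min _ t1 (-τs) (by linarith) (hx_diff i t1 ht1pos.le)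
        (fun s h1 h2 => hmin_i s h1 h2)
    have hyρ : x t1 i ≤ ρ := by rw [hyi]; linarith
    have hstrict := hH0' t1 ht1pos.le i (x t1) (fun l => hx_pos t1 (by linarith) l) hyρ hyile
    -- delayed-value estimate
    have hdel : ∀ j, (1 - δ) * x t1 i ≤ x (t1 - τ j) i * Real.exp (-x (t1 - τ j) i) := by
      intro j
      set z : ℝ := x (t1 - τ j) i with hz_def
      have hτj := hτ j
      have hτjs := hτs_ub j
      have hz_lb : x t1 i ≤ z := hmin_i (t1 - τ j) (by linarith) (by linarith)
      have hz_pos : 0 < z := lt_of_lt_of_le hyi_pos hz_lb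
      have hz_ub : z ≤ Z := by
        rcases le_or_gt (t1 - τ j) 0 with hc1 | hc1
        · have h1 : z ≤ M (t1 - τ j) := Finset.le_sup' _ (Finset.mem_univ i)
          have h2 : M (t1 - τ j) ≤ M t2 := ht2max ⟨by linarith, hc1⟩
          calc z ≤ M t2 := le_trans h1 h2
            _ ≤ Z := le_max_left _ _
        · have hgr := hgron i (t1 - τ j) t1 hc1.le (by linarith)
          have hE : (0:ℝ) < Real.exp (k₀ * (t1 - τ j)) := Real.exp_pos _
          have hkey : z * Real.exp (k₀ * (t1 - τ j)) ≤
              (x t1 i * Real.exp (k₀ * τ j)) * Real.exp (k₀ * (t1 - τ j)) := by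
            calc z * Real.exp (k₀ * (t1 - τ j)) ≤ x t1 i * Real.exp (k₀ * t1) := hgr
              _ = (x t1 i * Real.exp (k₀ * τ j)) * Real.exp (k₀ * (t1 - τ j)) := by
                  rw [mul_assoc, ← Real.exp_add]; ring_nf
          have h1 : z ≤ x t1 i * Real.exp (k₀ * τ j) := le_of_mul_le_mul_right hkey hE
          have h2 : x t1 i * Real.exp (k₀ * τ j) ≤ ρ * Real.exp (k₀ * τs) := by
            apply mul_le_mul hyρ (Real.exp_le_exp.mpr ?_) (Real.exp_pos _).le hρ.le
            exact mul_le_mul_of_nonneg_left hτjs hk₀pos.le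
          calc z ≤ ρ * Real.exp (k₀ * τs) := le_trans h1 h2
            _ ≤ Z := le_max_right _ _
      rcases le_or_gt z S with hzS | hzS
      · have h1 : Real.exp (-S) ≤ Real.exp (-z) := Real.exp_le_exp.mpr (by linarith)
        calc (1 - δ) * x t1 i = x t1 i * Real.exp (-S) := by rw [hexpS]; ring
          _ ≤ z * Real.exp (-z) := by
              apply mul_le_mul hz_lb h1 (Real.exp_pos _).le hz_pos.le
      · have h1 : κ ≤ z * Real.exp (-z) := by
          apply mul_le_mul hzS.le (Real.exp_le_exp.mpr (by linarith)) (Real.exp_pos _).le hz_pos.le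
        have h2 : (1 - δ) * x t1 i ≤ x t1 i := by nlinarith
        have h3 : x t1 i ≤ κ := by rw [hyi]; linarith
        linarith
    -- sum estimates
    have hbsum : x t1 i * (∑ l ∈ Finset.univ.erase i, b i l t1 (x t1 l) / x t1 l) ≤
        ∑ l ∈ Finset.univ.erase i, b i l t1 (x t1 l) := by
      rw [Finset.mul_sum]
      apply Finset.sum_le_sum
      intro l hl
      have hxl : 0 < x t1 l := hx_pos t1 (by linarith) l
      have hbnn : 0 ≤ b i l t1 (x t1 l) :=
        hb_nonneg i l (Finset.ne_of_mem_erase hl) t1 ht1pos.le _ hxl.le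
      have : x t1 i * (b i l t1 (x t1 l) / x t1 l) ≤ x t1 l * (b i l t1 (x t1 l) / x t1 l) :=
        mul_le_mul_of_nonneg_right (hyile l) (div_nonneg hbnn hxl.le)
      calc x t1 i * (b i l t1 (x t1 l) / x t1 l)
          ≤ x t1 l * (b i l t1 (x t1 l) / x t1 l) := this
        _ = b i l t1 (x t1 l) := by field_simp
    have hpsum : (1 - δ) * x t1 i * (∑ j, p i j t1) ≤
        ∑ j, p i j t1 * (x (t1 - τ j) i * Real.exp (-x (t1 - τ j) i)) := by
      rw [Finset.mul_sum]
      apply Finset.sum_le_sum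
      intro j _
      have := mul_le_mul_of_nonneg_left (hdel j) (hp_nonneg i j t1 ht1pos.le)
      nlinarith [this]
    have hexp : x t1 i * ((∑ l ∈ Finset.univ.erase i, b i l t1 (x t1 l) / x t1 l)
        + (1 - δ) * ∑ j, p i j t1)
        = x t1 i * (∑ l ∈ Finset.univ.erase i, b i l t1 (x t1 l) / x t1 l)
          + (1 - δ) * x t1 i * (∑ j, p i j t1) := by ring
    rw [hx_eq i t1 ht1pos.le] at hd0
    rw [hexp] at hstrict
    linarith
  -- conclusion
  set i0 : Fin N := ⟨0, hNpos⟩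
  have hev : ∀ᶠ t in atTop, ((c : ℝ) : EReal) ≤ ((Real.sqrt (∑ i, x t i ^ 2) : ℝ) : EReal) := by
    rw [eventually_atTop]
    refine ⟨0, fun t ht => ?_⟩
    rw [EReal.coe_le_coe_iff]
    have h1 : c ≤ x t i0 := le_trans (key t ht) (hm_le t i0)
    have h2 : x t i0 ≤ Real.sqrt (∑ i, x t i ^ 2) := by
      have h3 : x t i0 ^ 2 ≤ ∑ i, x t i ^ 2 :=
        Finset.single_le_sum (f := fun i => x t i ^ 2) (fun i _ => sq_nonneg _) (Finset.mem_univ i0)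
      calc x t i0 ≤ |x t i0| := le_abs_self _
        _ = Real.sqrt (x t i0 ^ 2) := (Real.sqrt_sq_eq_abs _).symm
        _ ≤ Real.sqrt (∑ i, x t i ^ 2) := Real.sqrt_le_sqrt h3
    linarith
  have hle : ((c : ℝ) : EReal) ≤ Filter.liminf
      (fun t => ((Real.sqrt (∑ i, x t i ^ 2) : ℝ) : EReal)) Filter.atTop :=
    Filter.le_liminf_of_le (by isBoundedDefault) hev
  exact lt_of_lt_of_le (by exact_mod_cast hc_pos) hle
end

section
/- Assume (Hk0-sys), (H0-sys) and (p-sys). Then the positive solutions of the N-dimensional Nicholson system are uniformly persistent: there exists ε > 0 such that every positive solution x satisfies liminf_{t→∞} ‖x(t)‖ > ε, where ‖·‖ is the Euclidean norm on ℝ^N. -/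
open Filter Real Set

lemma aux_expMul_mono (K : ℝ) (f : ℝ → ℝ) (hf : Continuous f)
    (hd : ∀ t, 0 ≤ t → DifferentiableAt ℝ f t)
    (hD : ∀ t, 0 ≤ t → -(K * f t) ≤ deriv f t) :
    MonotoneOn (fun t => f t * Real.exp (K * t)) (Set.Ici 0) := by
  apply monotoneOn_of_deriv_nonneg (convex_Ici 0)
  · exact (hf.mul (Real.continuous_exp.comp (continuous_const.mul continuous_id))).continuousOn
  · intro t ht
    rw [interior_Ici] at ht
    exact ((hd t ht.le).mul
      (((hasDerivAt_id t).const_mul K).exp.differentiableAt)).differentiableWithinAt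
  · intro t ht
    rw [interior_Ici] at ht
    have he : HasDerivAt (fun t => Real.exp (K * t)) (Real.exp (K * t) * (K * 1)) t :=
      ((hasDerivAt_id t).const_mul K).exp
    have hprod : HasDerivAt (fun t => f t * Real.exp (K * t))
        (deriv f t * Real.exp (K * t) + f t * (Real.exp (K * t) * (K * 1))) t :=
      ((hd t ht.le).hasDerivAt).mul he
    rw [hprod.deriv]
    have h1 := hD t ht.le
    have h2 := Real.exp_pos (K * t)
    nlinarith

lemma aux_deriv_nonpos {g : ℝ → ℝ} {a : ℝ} (hg : DifferentiableAt ℝ g a) (h0 : g a = 0)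
    (h : ∀ ε > 0, ∃ s, a < s ∧ s < a + ε ∧ g s < 0) : deriv g a ≤ 0 := by
  by_contra hc
  push_neg at hc
  have hs := hg.hasDerivAt
  rw [hasDerivAt_iff_tendsto_slope] at hs
  have hev : ∀ᶠ s in nhdsWithin a {a}ᶜ, 0 < slope g a s := hs.eventually_const_lt hc
  rw [Filter.Eventually, Metric.mem_nhdsWithin_iff] at hev
  obtain ⟨ε, hε, hball⟩ := hev
  obtain ⟨s, hs1, hs2, hs3⟩ := h ε hε
  have hmem : s ∈ Metric.ball a ε ∩ ({a}ᶜ : Set ℝ) := by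
    constructor
    · rw [Metric.mem_ball, Real.dist_eq, abs_lt]; constructor <;> linarith
    · simp [ne_of_gt hs1]
  have hpos : 0 < slope g a s := hball hmem
  rw [slope_def_field, h0] at hpos
  have : (g s - 0) / (s - a) < 0 := div_neg_of_neg_of_pos (by linarith) (by linarith)
  linarith

set_option maxHeartbeats 4000000 in
/-- Theorem 3.5 of the paper: under (Hk0-sys), (H0-sys) and (p-sys) the positive
solutions of the N-dimensional Nicholson system are uniformly persistent: there is
`ε > 0` such that every positive solution satisfies `liminf_{t→∞} ‖x(t)‖ > ε` with
the Euclidean norm (liminf in the extended reals). -/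
theorem nicholson_system_uniform_persistence
    (N k : ℕ) (hN : 2 ≤ N) (hk : 0 < k)
    (τ : Fin k → ℝ) (hτ : ∀ j, 0 < τ j)
    (τs : ℝ) (hτs_ub : ∀ j, τ j ≤ τs) (hτs_mem : ∃ j, τ j = τs)
    (d : Fin N → ℝ → ℝ → ℝ)
    (b : Fin N → Fin N → ℝ → ℝ → ℝ)
    (p : Fin N → Fin k → ℝ → ℝ)
    (H : Fin N → ℝ → (Fin N → ℝ) → ℝ)
    (hd_cont : ∀ i, Continuous fun q : ℝ × ℝ => d i q.1 q.2)
    (hb_cont : ∀ i l, l ≠ i → Continuous fun q : ℝ × ℝ => b i l q.1 q.2)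
    (hp_cont : ∀ i j, Continuous (p i j))
    (hH_cont : ∀ i, Continuous fun q : ℝ × (Fin N → ℝ) => H i q.1 q.2)
    (hd_nonneg : ∀ i t, 0 ≤ t → ∀ y, 0 ≤ y → 0 ≤ d i t y)
    (hb_nonneg : ∀ i l, l ≠ i → ∀ t, 0 ≤ t → ∀ y, 0 ≤ y → 0 ≤ b i l t y)
    (hp_nonneg : ∀ i j t, 0 ≤ t → 0 ≤ p i j t)
    (hH_nonneg : ∀ i t, 0 ≤ t → ∀ y : Fin N → ℝ, (∀ l, 0 ≤ y l) → 0 ≤ H i t y)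
    -- (Hk0-sys)
    (hk0 : ∃ k₀ : ℝ, 0 < k₀ ∧ ∀ i t, 0 ≤ t → ∀ y : Fin N → ℝ, (∀ l, 0 ≤ y l) →
      d i t (y i) + H i t y ≤ k₀ * y i)
    -- (H0-sys)
    (hH0 : ∃ δ ∈ Set.Ioo (0 : ℝ) 1, ∃ ρ : ℝ, 0 < ρ ∧
      ∀ t, 0 ≤ t → ∀ i, ∀ y : Fin N → ℝ, (∀ l, 0 < y l) → y i ≤ ρ →
        (∀ l, y i ≤ y l) →
        d i t (y i) + H i t y <
          y i * ((∑ l ∈ Finset.univ.erase i, b i l t (y l) / y l)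
            + (1 - δ) * ∑ j, p i j t))
    -- (p-sys)
    (hpc : ∃ c : ℝ, 0 < c ∧ ∀ i t, 0 ≤ t → c ≤ ∑ j, p i j t) :
    ∃ ε : ℝ, 0 < ε ∧
      ∀ x : ℝ → Fin N → ℝ,
        Continuous x →
        (∀ t, -τs ≤ t → ∀ i, 0 < x t i) →
        (∀ i, ∀ t, 0 ≤ t → DifferentiableAt ℝ (fun s => x s i) t) →
        (∀ i, ∀ t, 0 ≤ t →
          deriv (fun s => x s i) t =
            -d i t (x t i)
            + (∑ l ∈ Finset.univ.erase i, b i l t (x t l))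
            + (∑ j, p i j t * (x (t - τ j) i * Real.exp (-x (t - τ j) i)))
            - H i t (x t)) →
        (ε : EReal) < Filter.liminf
          (fun t => ((Real.sqrt (∑ i, x t i ^ 2) : ℝ) : EReal)) Filter.atTop := by
  obtain ⟨k₀, hk₀pos, hk₀⟩ := hk0
  obtain ⟨δ, ⟨hδ0, hδ1⟩, ρ, hρ, hH0'⟩ := hH0
  obtain ⟨c, hc, hpc'⟩ := hpc
  obtain ⟨j₀, hj₀⟩ := hτs_mem
  have hτs0 : 0 < τs := hj₀ ▸ hτ j₀
  haveI : Nonempty (Fin N) := ⟨⟨0, by omega⟩⟩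
  -- constants
  set σ : ℝ := Real.sqrt (1 - δ) with hσdef
  have hσpos : 0 < σ := Real.sqrt_pos.mpr (by linarith)
  have hσsq : σ ^ 2 = 1 - δ := Real.sq_sqrt (by linarith)
  have hσ1 : σ < 1 := by nlinarith
  set A : ℝ := σ - σ ^ 2 with hAdef
  have hApos : 0 < A := by nlinarith
  set L2 : ℝ := -Real.log σ with hL2def
  have hL2pos : 0 < L2 := by
    have := Real.log_neg hσpos hσ1
    simp [hL2def]; linarith
  have hexpL2 : Real.exp (-L2) = σ := by
    rw [hL2def, neg_neg, Real.exp_log hσpos]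
  set lam : ℝ := min (c * A / 2) (A / (2 * σ * τs)) with hlamdef
  have hlam : 0 < lam := by
    apply lt_min
    · positivity
    · positivity
  set ε₂ : ℝ := min ρ (L2 * Real.exp (-(k₀ * τs))) with hε₂def
  have hε₂pos : 0 < ε₂ := lt_min hρ (by positivity)
  have hε₂ρ : ε₂ ≤ ρ := min_le_left _ _
  have hε₂L : ε₂ * Real.exp (k₀ * τs) ≤ L2 := by
    have h1 : ε₂ ≤ L2 * Real.exp (-(k₀ * τs)) := min_le_right _ _
    have h2 : ε₂ * Real.exp (k₀ * τs) ≤ L2 * Real.exp (-(k₀ * τs)) * Real.exp (k₀ * τs) :=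
      mul_le_mul_of_nonneg_right h1 (Real.exp_pos _).le
    calc ε₂ * Real.exp (k₀ * τs) ≤ L2 * Real.exp (-(k₀ * τs)) * Real.exp (k₀ * τs) := h2
      _ = L2 := by rw [mul_assoc, ← Real.exp_add]; simp
  -- key scalar inequality
  have hcoef : A / 2 ≤ Real.exp (-(lam * τs)) * σ - σ ^ 2 := by
    have hlamτ : lam * τs ≤ A / (2 * σ) := by
      have h1 : lam ≤ A / (2 * σ * τs) := min_le_right _ _
      have h2 : lam * τs ≤ A / (2 * σ * τs) * τs := mul_le_mul_of_nonneg_right h1 hτs0.le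
      have h3 : A / (2 * σ * τs) * τs = A / (2 * σ) := by
        field_simp
      linarith
    have hexp : 1 - lam * τs ≤ Real.exp (-(lam * τs)) := by
      have := Real.add_one_le_exp (-(lam * τs)); linarith
    have h1 : 1 - A / (2 * σ) ≤ Real.exp (-(lam * τs)) := by linarith
    have h2 : (1 - A / (2 * σ)) * σ ≤ Real.exp (-(lam * τs)) * σ :=
      mul_le_mul_of_nonneg_right h1 hσpos.le
    have h3 : (1 - A / (2 * σ)) * σ = σ - A / 2 := by field_simp
    nlinarith
  have hkey : lam ≤ c * (Real.exp (-(lam * τs)) * σ - σ ^ 2) := by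
    have h4 : c * (A / 2) ≤ c * (Real.exp (-(lam * τs)) * σ - σ ^ 2) :=
      mul_le_mul_of_nonneg_left hcoef hc.le
    have h5 : lam ≤ c * A / 2 := min_le_left _ _
    linarith
  refine ⟨ε₂ / 2, by positivity, ?_⟩
  intro x hxc hxpos hxdiff hxode
  have hxci : ∀ i : Fin N, Continuous fun t => x t i := fun i => (continuous_apply i).comp hxc
  -- derivative lower bound -k₀ x_i and Gronwall
  have hDlow : ∀ (i : Fin N) (t : ℝ), 0 ≤ t → -(k₀ * x t i) ≤ deriv (fun s => x s i) t := by
    intro i t ht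
    rw [hxode i t ht]
    have hxt : ∀ l, 0 ≤ x t l := fun l => (hxpos t (by linarith) l).le
    have h1 := hk₀ i t ht (x t) hxt
    have h2 : 0 ≤ ∑ l ∈ Finset.univ.erase i, b i l t (x t l) := by
      apply Finset.sum_nonneg
      intro l hl
      exact hb_nonneg i l (Finset.ne_of_mem_erase hl) t ht _ (hxt l)
    have h3 : 0 ≤ ∑ j, p i j t * (x (t - τ j) i * Real.exp (-x (t - τ j) i)) := by
      apply Finset.sum_nonneg
      intro j _
      have hxd : 0 ≤ x (t - τ j) i := (hxpos (t - τ j) (by have := hτs_ub j; linarith) i).le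
      have := hp_nonneg i j t ht
      positivity
    linarith
  have gron : ∀ (i : Fin N) (s t : ℝ), 0 ≤ s → s ≤ t →
      x s i * Real.exp (k₀ * s) ≤ x t i * Real.exp (k₀ * t) := by
    intro i s t hs hst
    exact aux_expMul_mono k₀ (fun t => x t i) (hxci i) (hxdiff i) (hDlow i) hs
      (by simp only [Set.mem_Ici]; linarith) hst
  -- initial lower bound ν on [0, τs]
  obtain ⟨ν, hνpos, hνε₂, hνini⟩ :
      ∃ ν : ℝ, 0 < ν ∧ ν ≤ ε₂ ∧ ∀ s ∈ Set.Icc (0:ℝ) τs, ∀ i, ν ≤ x s i := by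
    have h1 : ∀ i : Fin N, ∃ m, 0 < m ∧ ∀ s ∈ Set.Icc (0:ℝ) τs, m ≤ x s i := by
      intro i
      obtain ⟨s₀, hs₀mem, hs₀min⟩ := isCompact_Icc.exists_isMinOn (Set.nonempty_Icc.mpr hτs0.le)
        (hxci i).continuousOn
      exact ⟨x s₀ i, hxpos s₀ (by have := hs₀mem.1; linarith) i, fun s hs => hs₀min hs⟩
    choose m hm1 hm2 using h1
    refine ⟨min ε₂ (Finset.univ.inf' Finset.univ_nonempty m), ?_, min_le_left _ _, ?_⟩
    · apply lt_min hε₂pos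
      rw [Finset.lt_inf'_iff]
      exact fun i _ => hm1 i
    · intro s hs i
      calc min ε₂ (Finset.univ.inf' Finset.univ_nonempty m)
          ≤ Finset.univ.inf' Finset.univ_nonempty m := min_le_right _ _
        _ ≤ m i := Finset.inf'_le _ (Finset.mem_univ i)
        _ ≤ x s i := hm2 i s hs
  -- the barrier
  set B : ℝ → ℝ := fun t => min (ν * Real.exp (lam * (t - τs))) ε₂ with hBdef
  have hBpos : ∀ t, 0 < B t := fun t => lt_min (by positivity) hε₂pos
  have hBle : ∀ t, B t ≤ ε₂ := fun t => min_le_right _ _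
  have hBcont : Continuous B := by
    apply Continuous.min _ continuous_const
    exact continuous_const.mul (Real.continuous_exp.comp (continuous_const.mul (continuous_id.sub continuous_const)))
  have hBgrow : ∀ a b', a ≤ b' → B b' ≤ B a * Real.exp (lam * (b' - a)) := by
    intro a b' hab
    have hE1 : (1:ℝ) ≤ Real.exp (lam * (b' - a)) :=
      Real.one_le_exp (mul_nonneg hlam.le (by linarith))
    have heq : ν * Real.exp (lam * (b' - τs)) =
        ν * Real.exp (lam * (a - τs)) * Real.exp (lam * (b' - a)) := by
      rw [mul_assoc, ← Real.exp_add]; ring_nf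
    rcases le_total (ν * Real.exp (lam * (a - τs))) ε₂ with hle | hge
    · rw [hBdef]
      simp only
      rw [min_eq_left hle]
      calc min (ν * Real.exp (lam * (b' - τs))) ε₂ ≤ ν * Real.exp (lam * (b' - τs)) :=
            min_le_left _ _
        _ = ν * Real.exp (lam * (a - τs)) * Real.exp (lam * (b' - a)) := heq
    · rw [hBdef]
      simp only
      rw [min_eq_right hge]
      calc min (ν * Real.exp (lam * (b' - τs))) ε₂ ≤ ε₂ := min_le_right _ _
        _ ≤ ε₂ * Real.exp (lam * (b' - a)) := le_mul_of_one_le_right hε₂pos.le hE1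
  -- initial segment is above the barrier
  have hBini : ∀ s, 0 ≤ s → s ≤ τs → ∀ i, B s ≤ x s i := by
    intro s hs0 hsτ i
    have h1 : Real.exp (lam * (s - τs)) ≤ 1 :=
      Real.exp_le_one_iff.mpr (mul_nonpos_of_nonneg_of_nonpos hlam.le (by linarith))
    calc B s ≤ ν * Real.exp (lam * (s - τs)) := min_le_left _ _
      _ ≤ ν * 1 := mul_le_mul_of_nonneg_left h1 hνpos.le
      _ = ν := mul_one ν
      _ ≤ x s i := hνini s ⟨hs0, hsτ⟩ i
  -- MAIN CLAIM
  have hmain : ∀ t, τs ≤ t → ∀ i, B t ≤ x t i := by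
    by_contra hco
    push_neg at hco
    obtain ⟨t₁, ht₁, i₁, hi₁⟩ := hco
    set S : Set ℝ := {t : ℝ | τs ≤ t ∧ ∃ i, x t i < B t} with hSdef
    have hSne : S.Nonempty := ⟨t₁, ht₁, i₁, hi₁⟩
    have hSbdd : BddBelow S := ⟨τs, fun s hs => hs.1⟩
    set a : ℝ := sInf S with hadef
    have haτ : τs ≤ a := le_csInf hSne fun s hs => hs.1
    have ha0 : 0 < a := lt_of_lt_of_le hτs0 haτ
    -- below a the barrier holds
    have ha_pre : ∀ s, 0 ≤ s → s < a → ∀ i, B s ≤ x s i := by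
      intro s hs0 hsa i
      rcases le_or_gt s τs with h | h
      · exact hBini s hs0 h i
      · have hns : s ∉ S := notMem_of_lt_csInf hsa hSbdd
        rw [hSdef, Set.mem_setOf_eq] at hns
        push_neg at hns
        exact hns h.le i
    -- at a the barrier holds as well (continuity)
    have ha_at : ∀ i, B a ≤ x a i := by
      intro i
      by_contra hcon
      push_neg at hcon
      have hFc : ContinuousAt (fun s => x s i - B s) a := ((hxci i).sub hBcont).continuousAt
      have hFa : x a i - B a < 0 := by linarith
      obtain ⟨dd, hdd, hball⟩ := Metric.continuousAt_iff.mp hFc (-(x a i - B a)) (by linarith)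
      set s : ℝ := max (a - dd / 2) (a / 2) with hsdef
      have hs_lt : s < a := max_lt (by linarith) (by linarith)
      have hs_ge : 0 ≤ s := le_trans (by linarith) (le_max_right _ _)
      have hdist : dist s a < dd := by
        rw [Real.dist_eq, abs_lt]
        constructor
        · have : a - dd / 2 ≤ s := le_max_left _ _
          linarith
        · linarith
      have h2 := hball hdist
      rw [Real.dist_eq, abs_lt] at h2
      have hFs : x s i - B s < 0 := by
        have := h2.2
        linarith
      have := ha_pre s hs_ge hs_lt i
      linarith
    -- choose a coordinate that violates the barrier right after a
    have hseq : ∃ i, ∀ ε, 0 < ε → ∃ s, s ∈ S ∧ s < a + ε ∧ x s i < B s := by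
      by_contra hni
      push_neg at hni
      choose εf hεf1 hεf2 using hni
      have hεm : 0 < Finset.univ.inf' Finset.univ_nonempty εf := by
        rw [Finset.lt_inf'_iff]; exact fun i _ => hεf1 i
      obtain ⟨s, hsS, hslt⟩ := (csInf_lt_iff hSbdd hSne).mp (lt_add_of_pos_right a hεm)
      obtain ⟨hsτ, i, hxi⟩ := hsS
      have h2 : s < a + εf i := by
        have := Finset.inf'_le εf (Finset.mem_univ i)
        linarith
      exact absurd (hεf2 i s ⟨hsτ, i, hxi⟩ h2) (not_le.mpr hxi)
    obtain ⟨i, hi⟩ := hseq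
    have hxaB : x a i = B a := by
      refine le_antisymm ?_ (ha_at i)
      by_contra hcon
      push_neg at hcon
      have hFc : ContinuousAt (fun s => x s i - B s) a := ((hxci i).sub hBcont).continuousAt
      have hFa : 0 < x a i - B a := by linarith
      obtain ⟨dd, hdd, hball⟩ := Metric.continuousAt_iff.mp hFc (x a i - B a) hFa
      obtain ⟨s, hsS, hslt, hxs⟩ := hi dd hdd
      have has : a ≤ s := csInf_le hSbdd hsS
      have hdist : dist s a < dd := by
        rw [Real.dist_eq, abs_lt]; constructor <;> linarith
      have h2 := hball hdist
      rw [Real.dist_eq, abs_lt] at h2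
      have : 0 < x s i - B s := by
        have := h2.1
        linarith
      linarith
    -- derivative upper bound at a
    have hB₀ : HasDerivAt (fun s => B a * Real.exp (lam * (s - a))) (B a * lam) a := by
      have h1 : HasDerivAt (fun s : ℝ => lam * (s - a)) (lam * 1) a :=
        ((hasDerivAt_id a).sub_const a).const_mul lam
      have h2 := (h1.exp).const_mul (B a)
      have h3 : B a * (Real.exp (lam * (a - a)) * (lam * 1)) = B a * lam := by simp
      rwa [h3] at h2
    have hupper : deriv (fun s => x s i) a ≤ B a * lam := by
      have hgd : DifferentiableAt ℝ (fun s => x s i - B a * Real.exp (lam * (s - a))) a :=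
        (hxdiff i a ha0.le).sub hB₀.differentiableAt
      have hg0 : x a i - B a * Real.exp (lam * (a - a)) = 0 := by
        rw [hxaB]; simp
      have hneg : ∀ ε > 0, ∃ s, a < s ∧ s < a + ε ∧
          (x s i - B a * Real.exp (lam * (s - a))) < 0 := by
        intro ε hε
        obtain ⟨s, hsS, hslt, hxs⟩ := hi ε hε
        have has : a ≤ s := csInf_le hSbdd hsS
        have hsa : a < s := by
          rcases eq_or_lt_of_le has with h | h
          · exfalso
            rw [← h] at hxs
            rw [hxaB] at hxs
            exact lt_irrefl _ hxs
          · exact h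
        have hBB₀ : B s ≤ B a * Real.exp (lam * (s - a)) := hBgrow a s has
        exact ⟨s, hsa, hslt, by linarith⟩
      have hd0 := aux_deriv_nonpos hgd hg0 hneg
      have hder : deriv (fun s => x s i - B a * Real.exp (lam * (s - a))) a
          = deriv (fun s => x s i) a - B a * lam := by
        rw [deriv_fun_sub (hxdiff i a ha0.le) hB₀.differentiableAt, hB₀.deriv]
      rw [hder] at hd0
      linarith
    -- derivative lower bound at a (via the system and (H0-sys))
    have h0a : (0:ℝ) ≤ a := ha0.le
    have hposa : ∀ l, 0 < x a l := fun l => hxpos a (by linarith) l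
    have hmin' : ∀ l, x a i ≤ x a l := fun l => by
      rw [hxaB]; exact ha_at l
    have hiρ : x a i ≤ ρ := by
      rw [hxaB]; exact le_trans (hBle a) hε₂ρ
    have hH0a := hH0' a h0a i (x a) hposa hiρ hmin'
    have hsum_b : x a i * (∑ l ∈ Finset.univ.erase i, b i l a (x a l) / x a l)
        ≤ ∑ l ∈ Finset.univ.erase i, b i l a (x a l) := by
      rw [Finset.mul_sum]
      apply Finset.sum_le_sum
      intro l hl
      have hlne : l ≠ i := Finset.ne_of_mem_erase hl
      have hb := hb_nonneg i l hlne a h0a (x a l) (hposa l).le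
      have hdiv : x a i / x a l ≤ 1 := (div_le_one (hposa l)).mpr (hmin' l)
      calc x a i * (b i l a (x a l) / x a l) = b i l a (x a l) * (x a i / x a l) := by ring
        _ ≤ b i l a (x a l) * 1 := mul_le_mul_of_nonneg_left hdiv hb
        _ = b i l a (x a l) := mul_one _
    have hdel : ∀ j : Fin k, σ * Real.exp (-(lam * τs)) * x a i
        ≤ x (a - τ j) i * Real.exp (-x (a - τ j) i) := by
      intro j
      have hτj0 : 0 < τ j := hτ j
      have hτjs : τ j ≤ τs := hτs_ub j
      have hd0 : 0 ≤ a - τ j := by linarith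
      have hdlta : a - τ j < a := by linarith
      have hlow0 : B (a - τ j) ≤ x (a - τ j) i := ha_pre (a - τ j) hd0 hdlta i
      have hg := hBgrow (a - τ j) a (by linarith)
      have heq1 : lam * (a - (a - τ j)) = lam * τ j := by ring_nf
      rw [heq1] at hg
      have hE := Real.exp_pos (lam * τ j)
      have h1 : B a * Real.exp (-(lam * τ j)) ≤ B (a - τ j) := by
        rw [Real.exp_neg]
        rw [mul_inv_le_iff₀ hE]
        linarith
      have hmon : Real.exp (-(lam * τs)) ≤ Real.exp (-(lam * τ j)) :=
        Real.exp_le_exp.mpr (neg_le_neg (mul_le_mul_of_nonneg_left hτjs hlam.le))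
      have hBlow : B a * Real.exp (-(lam * τs)) ≤ x (a - τ j) i := by
        have := mul_le_mul_of_nonneg_left hmon (hBpos a).le
        linarith
      -- upper bound on the delayed value
      have hup1 := gron i (a - τ j) a hd0 (by linarith)
      have heq2 : Real.exp (k₀ * a) = Real.exp (k₀ * (a - τ j)) * Real.exp (k₀ * τ j) := by
        rw [← Real.exp_add]; ring_nf
      rw [heq2] at hup1
      have hup2 : x (a - τ j) i ≤ x a i * Real.exp (k₀ * τ j) := by
        have hE2 := Real.exp_pos (k₀ * (a - τ j))
        rw [show x a i * (Real.exp (k₀ * (a - τ j)) * Real.exp (k₀ * τ j))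
            = x a i * Real.exp (k₀ * τ j) * Real.exp (k₀ * (a - τ j)) from by ring] at hup1
        exact le_of_mul_le_mul_right hup1 hE2
      have hdelL2 : x (a - τ j) i ≤ L2 := by
        have hA1 : x a i ≤ ε₂ := by rw [hxaB]; exact hBle a
        have hA2 : Real.exp (k₀ * τ j) ≤ Real.exp (k₀ * τs) :=
          Real.exp_le_exp.mpr (mul_le_mul_of_nonneg_left hτjs hk₀pos.le)
        calc x (a - τ j) i ≤ x a i * Real.exp (k₀ * τ j) := hup2
          _ ≤ ε₂ * Real.exp (k₀ * τs) :=
              mul_le_mul hA1 hA2 (Real.exp_pos _).le hε₂pos.le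
          _ ≤ L2 := hε₂L
      have hexpdel : σ ≤ Real.exp (-x (a - τ j) i) := by
        rw [← hexpL2]
        exact Real.exp_le_exp.mpr (by linarith)
      have hfinal : (B a * Real.exp (-(lam * τs))) * σ
          ≤ x (a - τ j) i * Real.exp (-x (a - τ j) i) :=
        mul_le_mul hBlow hexpdel hσpos.le (hxpos _ (by linarith) i).le
      calc σ * Real.exp (-(lam * τs)) * x a i
          = (B a * Real.exp (-(lam * τs))) * σ := by rw [hxaB]; ring
        _ ≤ x (a - τ j) i * Real.exp (-x (a - τ j) i) := hfinal
    have hode := hxode i a h0a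
    have hPc : c ≤ ∑ j, p i j a := hpc' i a h0a
    have hSp_low : (∑ j, p i j a) * (σ * Real.exp (-(lam * τs)) * x a i)
        ≤ ∑ j, p i j a * (x (a - τ j) i * Real.exp (-x (a - τ j) i)) := by
      rw [Finset.sum_mul]
      apply Finset.sum_le_sum
      intro j _
      exact mul_le_mul_of_nonneg_left (hdel j) (hp_nonneg i j a h0a)
    -- final contradiction
    have hcoef0 : 0 ≤ Real.exp (-(lam * τs)) * σ - σ ^ 2 := by linarith
    have e3 : c * (Real.exp (-(lam * τs)) * σ - σ ^ 2)
        ≤ (∑ j, p i j a) * (Real.exp (-(lam * τs)) * σ - σ ^ 2) :=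
      mul_le_mul_of_nonneg_right hPc hcoef0
    have e4 : x a i * lam ≤ x a i * ((∑ j, p i j a) * (Real.exp (-(lam * τs)) * σ - σ ^ 2)) :=
      mul_le_mul_of_nonneg_left (le_trans hkey e3) (hposa i).le
    have hH0a' : d i a (x a i) + H i a (x a)
        < x a i * (∑ l ∈ Finset.univ.erase i, b i l a (x a l) / x a l)
          + x a i * (σ ^ 2 * (∑ j, p i j a)) := by
      have hre : x a i * ((∑ l ∈ Finset.univ.erase i, b i l a (x a l) / x a l)
          + (1 - δ) * ∑ j, p i j a)
          = x a i * (∑ l ∈ Finset.univ.erase i, b i l a (x a l) / x a l)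
            + x a i * (σ ^ 2 * (∑ j, p i j a)) := by
        rw [hσsq]; ring
      linarith only [hH0a, hre.ge, hre.le]
    have e2 : (∑ j, p i j a) * (σ * Real.exp (-(lam * τs)) * x a i)
        - x a i * (σ ^ 2 * (∑ j, p i j a))
        = x a i * ((∑ j, p i j a) * (Real.exp (-(lam * τs)) * σ - σ ^ 2)) := by ring
    have hupper' : deriv (fun s => x s i) a ≤ x a i * lam := by
      rw [hxaB]; linarith [hupper]
    linarith only [hode, hH0a', hsum_b, hSp_low, e2, e4, hupper']
  -- conclusion
  set T : ℝ := τs + (Real.log ε₂ - Real.log ν) / lam with hTdef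
  have hfinal : ∀ t, max T τs ≤ t → ∀ i, ε₂ ≤ x t i := by
    intro t ht i
    have htτs : τs ≤ t := le_trans (le_max_right _ _) ht
    have hTt : T ≤ t := le_trans (le_max_left _ _) ht
    have h1 : ε₂ ≤ ν * Real.exp (lam * (t - τs)) := by
      have hq : (Real.log ε₂ - Real.log ν) / lam ≤ t - τs := by
        rw [hTdef] at hTt; linarith
      have h2 : Real.log ε₂ - Real.log ν ≤ lam * (t - τs) := by
        calc Real.log ε₂ - Real.log ν = (Real.log ε₂ - Real.log ν) / lam * lam := by
              field_simp
          _ ≤ (t - τs) * lam := mul_le_mul_of_nonneg_right hq hlam.le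
          _ = lam * (t - τs) := by ring
      have h3 : Real.exp (Real.log ε₂ - Real.log ν) ≤ Real.exp (lam * (t - τs)) :=
        Real.exp_le_exp.mpr h2
      have h4 : Real.exp (Real.log ε₂ - Real.log ν) = ε₂ / ν := by
        rw [Real.exp_sub, Real.exp_log hε₂pos, Real.exp_log hνpos]
      rw [h4] at h3
      calc ε₂ = ν * (ε₂ / ν) := by field_simp
        _ ≤ ν * Real.exp (lam * (t - τs)) := mul_le_mul_of_nonneg_left h3 hνpos.le
    have h5 : ε₂ ≤ B t := le_min h1 le_rfl
    exact le_trans h5 (hmain t htτs i)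
  have hev : ∀ᶠ t in Filter.atTop,
      (ε₂ : EReal) ≤ ((Real.sqrt (∑ i, x t i ^ 2) : ℝ) : EReal) := by
    rw [Filter.eventually_atTop]
    refine ⟨max T τs, fun t ht => ?_⟩
    have i₀ : Fin N := ⟨0, by omega⟩
    have htτs : τs ≤ t := le_trans (le_max_right _ _) ht
    have hx0 : 0 ≤ x t i₀ := (hxpos t (by linarith) i₀).le
    have h1 : x t i₀ ^ 2 ≤ ∑ i, x t i ^ 2 :=
      Finset.single_le_sum (fun i _ => sq_nonneg (x t i)) (Finset.mem_univ i₀)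
    have h2 : Real.sqrt (x t i₀ ^ 2) ≤ Real.sqrt (∑ i, x t i ^ 2) := Real.sqrt_le_sqrt h1
    have h3 : Real.sqrt (x t i₀ ^ 2) = x t i₀ := Real.sqrt_sq hx0
    have h4 := hfinal t ht i₀
    have h5 : ε₂ ≤ Real.sqrt (∑ i, x t i ^ 2) := by
      rw [h3] at h2; linarith
    exact_mod_cast h5
  have hlim : (ε₂ : EReal) ≤ Filter.liminf
      (fun t => ((Real.sqrt (∑ i, x t i ^ 2) : ℝ) : EReal)) Filter.atTop :=
    Filter.le_liminf_of_le (h := hev)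
  refine lt_of_lt_of_le ?_ hlim
  exact_mod_cast (by linarith : ε₂ / 2 < ε₂)
end

section
/- Assume (H0-sys) and (p-sys). Then there exists r₀ > 0 such that for every r ∈ (0, r₀) there exist c₀ > 0 and η ∈ (0, r) with the property that Σ_{j=1}^k p_{i,j}(t)·f(y) + Σ_{l≠i} b_{i,l}(t, x_l) − G_i(t,x) ≥ c₀ for all t ≥ 0, every index i, every y ∈ [r−η, r], and every x ∈ (0,∞)^N with x_i ∈ [r−η, r] and x_i ≤ x_l for every l. -/
/-- Quantitative form of condition (3.7) of the paper: under (H0-sys) and (p-sys)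
there is `r₀ > 0` such that for every `r ∈ (0, r₀)` the quantity
`Σ_j p_{i,j}(t) f(y) + Σ_{l≠i} b_{i,l}(t, x_l) − G_i(t,x)` admits a positive lower
bound for `t ≥ 0`, every index `i`, `y` close to `r` from below, and every positive
vector `x` whose minimal coordinate is `x_i`, close to `r` from below. -/
theorem nicholson_system_uniform_gap
    (N k : ℕ) (hN : 2 ≤ N) (hk : 0 < k)
    (τ : Fin k → ℝ) (hτ : ∀ j, 0 < τ j)
    (d : Fin N → ℝ → ℝ → ℝ)
    (b : Fin N → Fin N → ℝ → ℝ → ℝ)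
    (p : Fin N → Fin k → ℝ → ℝ)
    (H : Fin N → ℝ → (Fin N → ℝ) → ℝ)
    (hd_cont : ∀ i, Continuous fun q : ℝ × ℝ => d i q.1 q.2)
    (hb_cont : ∀ i l, l ≠ i → Continuous fun q : ℝ × ℝ => b i l q.1 q.2)
    (hp_cont : ∀ i j, Continuous (p i j))
    (hH_cont : ∀ i, Continuous fun q : ℝ × (Fin N → ℝ) => H i q.1 q.2)
    (hd_nonneg : ∀ i t, 0 ≤ t → ∀ y, 0 ≤ y → 0 ≤ d i t y)
    (hb_nonneg : ∀ i l, l ≠ i → ∀ t, 0 ≤ t → ∀ y, 0 ≤ y → 0 ≤ b i l t y)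
    (hp_nonneg : ∀ i j t, 0 ≤ t → 0 ≤ p i j t)
    (hH_nonneg : ∀ i t, 0 ≤ t → ∀ y : Fin N → ℝ, (∀ l, 0 ≤ y l) → 0 ≤ H i t y)
    -- (H0-sys)
    (δ ρ : ℝ) (hδ : δ ∈ Set.Ioo (0 : ℝ) 1) (hρ : 0 < ρ)
    (hH0 : ∀ t, 0 ≤ t → ∀ i, ∀ y : Fin N → ℝ, (∀ l, 0 < y l) → y i ≤ ρ →
      (∀ l, y i ≤ y l) →
      d i t (y i) + H i t y <
        y i * ((∑ l ∈ Finset.univ.erase i, b i l t (y l) / y l)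
          + (1 - δ) * ∑ j, p i j t))
    -- (p-sys)
    (c : ℝ) (hc : 0 < c) (hpc : ∀ i t, 0 ≤ t → c ≤ ∑ j, p i j t) :
    ∃ r₀ : ℝ, 0 < r₀ ∧ ∀ r ∈ Set.Ioo (0 : ℝ) r₀,
      ∃ c₀ : ℝ, 0 < c₀ ∧ ∃ η ∈ Set.Ioo (0 : ℝ) r,
        ∀ t, 0 ≤ t → ∀ i, ∀ y ∈ Set.Icc (r - η) r,
          ∀ x : Fin N → ℝ, (∀ l, 0 < x l) → x i ∈ Set.Icc (r - η) r →
            (∀ l, x i ≤ x l) →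
            c₀ ≤ (∑ j, p i j t * (y * Real.exp (-y)))
              + (∑ l ∈ Finset.univ.erase i, b i l t (x l))
              - (d i t (x i) + H i t x) := by
  obtain ⟨hδ0, hδ1⟩ := hδ
  refine ⟨min ρ (δ/2), lt_min hρ (by linarith), ?_⟩
  rintro r ⟨hr0, hrlt⟩
  have hrρ : r < ρ := lt_of_lt_of_le hrlt (min_le_left _ _)
  have hrδ : r < δ/2 := lt_of_lt_of_le hrlt (min_le_right _ _)
  refine ⟨c * (δ * r / 4), by positivity, δ * r / 4, ⟨by positivity, by nlinarith⟩, ?_⟩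
  intro t ht i y hy x hx hxi hxmin
  have hSp : c ≤ ∑ j, p i j t := hpc i t ht
  have hG := hH0 t ht i x hx (le_trans hxi.2 hrρ.le) hxmin
  rw [mul_add] at hG
  have hbsum : x i * (∑ l ∈ Finset.univ.erase i, b i l t (x l) / x l)
      ≤ ∑ l ∈ Finset.univ.erase i, b i l t (x l) := by
    rw [Finset.mul_sum]
    apply Finset.sum_le_sum
    intro l hl
    have hlne : l ≠ i := Finset.ne_of_mem_erase hl
    have hbl : 0 ≤ b i l t (x l) := hb_nonneg i l hlne t ht (x l) (hx l).le
    have hxl : 0 < x l := hx l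
    calc x i * (b i l t (x l) / x l) = b i l t (x l) * (x i / x l) := by ring
    _ ≤ b i l t (x l) * 1 := by
        apply mul_le_mul_of_nonneg_left _ hbl
        exact div_le_one_of_le₀ (hxmin l) hxl.le
    _ = _ := mul_one _
  have hy1 : r - δ*r/4 ≤ y := hy.1
  have hy0 : 0 < y := lt_of_lt_of_le (by nlinarith) hy.1
  have hey : 1 - y ≤ Real.exp (-y) := by
    have := Real.add_one_le_exp (-y); linarith
  have hfy : (r - δ*r/4) * (1 - δ/2) ≤ y * Real.exp (-y) := by
    have hy2 : y ≤ δ/2 := le_trans hy.2 hrδ.le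
    have h1 : y * (1 - y) ≤ y * Real.exp (-y) :=
      mul_le_mul_of_nonneg_left hey hy0.le
    have h2 : (r - δ*r/4) * (1 - δ/2) ≤ y * (1 - y) :=
      mul_le_mul hy1 (by linarith) (by linarith) hy0.le
    linarith
  have hxir : x i ≤ r := hxi.2
  have hpf : (∑ j, p i j t * (y * Real.exp (-y)))
      = (∑ j, p i j t) * (y * Real.exp (-y)) := Finset.sum_mul _ _ _ |>.symm
  have hSp0 : (0:ℝ) ≤ ∑ j, p i j t := le_trans hc.le hSp
  have hgap : (1-δ) * x i + δ*r/4 ≤ y * Real.exp (-y) := by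
    have h4 : (1-δ) * x i ≤ (1-δ) * r :=
      mul_le_mul_of_nonneg_left hxir (by linarith)
    nlinarith [mul_pos hr0 (mul_pos hδ0 hδ0)]
  have hkey : c * (δ*r/4) + x i * ((1-δ) * ∑ j, p i j t)
      ≤ (∑ j, p i j t) * (y * Real.exp (-y)) := by
    have h3 := mul_le_mul_of_nonneg_left hgap hSp0
    have h4 : c * (δ*r/4) ≤ (∑ j, p i j t) * (δ*r/4) :=
      mul_le_mul_of_nonneg_right hSp (by positivity)
    nlinarith
  rw [hpf]
  linarith
end

section
/- Assume all coefficient functions are T-periodic in t for some fixed T > 0, and assume (H0-sys) and (per). Then there exist ε₀ > 0 and R₀ > 0, depending only on the coefficient functions, such that for every λ ∈ (0,1] and every T-periodic positive solution x of the λ-system x_i′(t) = λ·( −d_i(t, x_i(t)) + Σ_{l≠i} b_{i,l}(t, x_l(t)) + Σ_{j=1}^k p_{i,j}(t)·f(x_i(t−τ_j)) − H_i(t, x(t)) ), one has ε₀ ≤ x_i(t) ≤ R₀ for all t ∈ ℝ and all i. -/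
private lemma f_le_einv (u : ℝ) : u * Real.exp (-u) ≤ Real.exp (-1) := by
  have h1 : u ≤ Real.exp (u - 1) := by
    have := Real.add_one_le_exp (u - 1); linarith
  have h2 : u * Real.exp (-u) ≤ Real.exp (u - 1) * Real.exp (-u) :=
    mul_le_mul_of_nonneg_right h1 (Real.exp_pos _).le
  have h3 : Real.exp (u - 1) * Real.exp (-u) = Real.exp (-1) := by
    rw [← Real.exp_add]; ring_nf
  linarith

private lemma f_min_endpoints {m u R : ℝ} (hm : 0 ≤ m) (h1 : m ≤ u) (h2 : u ≤ R) :
    min (m * Real.exp (-m)) (R * Real.exp (-R)) ≤ u * Real.exp (-u) := by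
  have hu0 : (0:ℝ) ≤ u := hm.trans h1
  rcases le_total u 1 with hu | hu
  · refine le_trans (min_le_left _ _) ?_
    have key : m ≤ u * Real.exp (m - u) := by
      have h3 : u * (m - u + 1) ≤ u * Real.exp (m - u) :=
        mul_le_mul_of_nonneg_left (Real.add_one_le_exp (m - u)) hu0
      nlinarith
    have h4 : m * Real.exp (-m) ≤ u * Real.exp (m - u) * Real.exp (-m) :=
      mul_le_mul_of_nonneg_right key (Real.exp_pos _).le
    have h5 : u * Real.exp (m - u) * Real.exp (-m) = u * Real.exp (-u) := by
      rw [mul_assoc, ← Real.exp_add]; ring_nf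
    linarith
  · refine le_trans (min_le_right _ _) ?_
    have key : R ≤ u * Real.exp (R - u) := by
      have h3 : u * (R - u + 1) ≤ u * Real.exp (R - u) :=
        mul_le_mul_of_nonneg_left (Real.add_one_le_exp (R - u)) hu0
      nlinarith
    have h4 : R * Real.exp (-R) ≤ u * Real.exp (R - u) * Real.exp (-R) :=
      mul_le_mul_of_nonneg_right key (Real.exp_pos _).le
    have h5 : u * Real.exp (R - u) * Real.exp (-R) = u * Real.exp (-u) := by
      rw [mul_assoc, ← Real.exp_add]; ring_nf
    linarith

/-- Lemma 4.1 of the paper: under (H0-sys) and (per), the T-periodic positive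
solutions of the homotopic λ-systems, λ ∈ (0,1], admit uniform a priori bounds
`ε₀ ≤ x_i(t) ≤ R₀` depending only on the coefficient functions. -/
theorem nicholson_system_periodic_apriori_bounds
    (N k : ℕ) (hN : 2 ≤ N) (hk : 0 < k)
    (τ : Fin k → ℝ) (hτ : ∀ j, 0 < τ j)
    (T : ℝ) (hT : 0 < T)
    (d : Fin N → ℝ → ℝ → ℝ)
    (b : Fin N → Fin N → ℝ → ℝ → ℝ)
    (p : Fin N → Fin k → ℝ → ℝ)
    (H : Fin N → ℝ → (Fin N → ℝ) → ℝ)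
    (hd_cont : ∀ i, Continuous fun q : ℝ × ℝ => d i q.1 q.2)
    (hb_cont : ∀ i l, l ≠ i → Continuous fun q : ℝ × ℝ => b i l q.1 q.2)
    (hp_cont : ∀ i j, Continuous (p i j))
    (hH_cont : ∀ i, Continuous fun q : ℝ × (Fin N → ℝ) => H i q.1 q.2)
    (hd_nonneg : ∀ i t y, 0 ≤ y → 0 ≤ d i t y)
    (hb_nonneg : ∀ i l, l ≠ i → ∀ t y, 0 ≤ y → 0 ≤ b i l t y)
    (hp_nonneg : ∀ i j t, 0 ≤ p i j t)
    (hH_nonneg : ∀ i t, ∀ y : Fin N → ℝ, (∀ l, 0 ≤ y l) → 0 ≤ H i t y)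
    -- T-periodicity of the coefficients
    (hd_per : ∀ i t y, d i (t + T) y = d i t y)
    (hb_per : ∀ i l, l ≠ i → ∀ t y, b i l (t + T) y = b i l t y)
    (hp_per : ∀ i j t, p i j (t + T) = p i j t)
    (hH_per : ∀ i t y, H i (t + T) y = H i t y)
    -- (H0-sys)
    (hH0 : ∃ δ ∈ Set.Ioo (0 : ℝ) 1, ∃ ρ : ℝ, 0 < ρ ∧
      ∀ t, ∀ i, ∀ y : Fin N → ℝ, (∀ l, 0 < y l) → y i ≤ ρ →
        (∀ l, y i ≤ y l) →
        d i t (y i) + H i t y <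
          y i * ((∑ l ∈ Finset.univ.erase i, b i l t (y l) / y l)
            + (1 - δ) * ∑ j, p i j t))
    -- (per)
    (hper : ∃ β : ℝ, 0 < β ∧ ∃ R' : ℝ, 0 < R' ∧
      ∀ t, ∀ i, ∀ y : Fin N → ℝ, (∀ l, 0 < y l) → R' ≤ y i →
        (∀ l, y l ≤ y i) →
        d i t (y i) + H i t y >
          y i * ((∑ l ∈ Finset.univ.erase i, b i l t (y l) / y l) + β)) :
    ∃ ε₀ : ℝ, 0 < ε₀ ∧ ∃ R₀ : ℝ, 0 < R₀ ∧
      ∀ lam ∈ Set.Ioc (0 : ℝ) 1,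
        ∀ x : ℝ → Fin N → ℝ,
          Continuous x →
          (∀ t, x (t + T) = x t) →
          (∀ t i, 0 < x t i) →
          (∀ i t, DifferentiableAt ℝ (fun s => x s i) t) →
          (∀ i t,
            deriv (fun s => x s i) t =
              lam * (-d i t (x t i)
                + (∑ l ∈ Finset.univ.erase i, b i l t (x t l))
                + (∑ j, p i j t * (x (t - τ j) i * Real.exp (-x (t - τ j) i)))
                - H i t (x t))) →
          ∀ t i, ε₀ ≤ x t i ∧ x t i ≤ R₀ := by
  obtain ⟨δ, ⟨hδ0, hδ1⟩, ρ, hρ, hH0⟩ := hH0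
  obtain ⟨β, hβ, R', hR', hper⟩ := hper
  have hδ1' : (0:ℝ) < 1 - δ := by linarith
  haveI : NeZero N := ⟨by omega⟩
  have hIcc : (Set.Icc (0:ℝ) T).Nonempty := ⟨0, le_refl 0, hT.le⟩
  -- uniform bound on the p-sums
  have hchoice : ∀ i : Fin N, ∃ s ∈ Set.Icc (0:ℝ) T,
      IsMaxOn (fun t => ∑ j, p i j t) (Set.Icc 0 T) s :=
    fun i => isCompact_Icc.exists_isMaxOn hIcc
      (continuous_finset_sum _ fun j _ => hp_cont i j).continuousOn
  choose ps hpsmem hpsmax using hchoice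
  have hne : (Finset.univ : Finset (Fin N)).Nonempty := Finset.univ_nonempty
  set P : ℝ := Finset.univ.sup' hne (fun i => ∑ j, p i j (ps i)) with hPdef
  have hPle : ∀ i, ∀ t ∈ Set.Icc (0:ℝ) T, (∑ j, p i j t) ≤ P := by
    intro i t ht
    have h2 : (∑ j, p i j (ps i)) ≤ P := Finset.le_sup' (fun i => ∑ j, p i j (ps i)) (Finset.mem_univ i)
    exact le_trans (hpsmax i ht) h2
  have hP0 : 0 ≤ P :=
    le_trans (Finset.sum_nonneg fun j _ => hp_nonneg ⟨0, by omega⟩ j 0)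
      (hPle ⟨0, by omega⟩ 0 ⟨le_refl 0, hT.le⟩)
  set R₀ : ℝ := max R' (P * Real.exp (-1) / β) + 1 with hR₀def
  have hR₀pos : 0 < R₀ := by
    have h1 : R' ≤ max R' (P * Real.exp (-1) / β) := le_max_left _ _
    rw [hR₀def]; linarith
  set ε₀ : ℝ := min ρ (min (Real.log (1-δ)⁻¹) (R₀ * Real.exp (-R₀) / (1-δ))) with hεdef
  have hc : 0 < Real.log (1-δ)⁻¹ := Real.log_pos ((one_lt_inv₀ hδ1').2 (by linarith))
  have hε0 : 0 < ε₀ := lt_min hρ (lt_min hc (by positivity))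
  refine ⟨ε₀, hε0, R₀, hR₀pos, ?_⟩
  intro lam hlam x hxc hxper hxpos hxdiff hxode
  have hxcoord : ∀ l : Fin N, Continuous fun s => x s l :=
    fun l => (continuous_apply l).comp hxc
  have hxp : ∀ l : Fin N, Function.Periodic (fun s => x s l) T :=
    fun l s => congrFun (hxper s) l
  -- balance equation at critical points
  have hbalance : ∀ (t0 : ℝ) (i0 : Fin N), deriv (fun s => x s i0) t0 = 0 →
      d i0 t0 (x t0 i0) + H i0 t0 (x t0) =
        (∑ l ∈ Finset.univ.erase i0, b i0 l t0 (x t0 l)) +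
        ∑ j, p i0 j t0 * (x (t0 - τ j) i0 * Real.exp (-x (t0 - τ j) i0)) := by
    intro t0 i0 h0
    have h1 := hxode i0 t0
    rw [h0] at h1
    have hE := (mul_eq_zero.mp h1.symm).resolve_left (ne_of_gt hlam.1)
    linarith
  -- global maximum
  have hmaxc : ∀ l : Fin N, ∃ s ∈ Set.Icc (0:ℝ) T,
      IsMaxOn (fun t => x t l) (Set.Icc 0 T) s :=
    fun l => isCompact_Icc.exists_isMaxOn hIcc (hxcoord l).continuousOn
  choose tM htMmem htMmax using hmaxc
  obtain ⟨iM, _, hiM⟩ := Finset.exists_max_image Finset.univ (fun l => x (tM l) l) hne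
  have hMglob : ∀ s, ∀ l, x s l ≤ x (tM iM) iM := by
    intro s l
    obtain ⟨s', hs', he⟩ := (hxp l).exists_mem_Ico₀ hT s
    calc x s l = x s' l := he
      _ ≤ x (tM l) l := htMmax l (Set.Ico_subset_Icc_self hs')
      _ ≤ x (tM iM) iM := hiM l (Finset.mem_univ l)
  -- upper bound for the maximum
  have hMlt : x (tM iM) iM < R₀ := by
    rcases lt_or_ge (x (tM iM) iM) R' with h | h
    · have h1 : R' ≤ max R' (P * Real.exp (-1) / β) := le_max_left _ _
      rw [hR₀def]; linarith
    · have hloc : IsLocalMax (fun s => x s iM) (tM iM) :=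
        (isMaxOn_univ_iff.mpr fun s => hMglob s iM).isLocalMax Filter.univ_mem
      have heq := hbalance (tM iM) iM hloc.deriv_eq_zero
      have hgt := hper (tM iM) iM (x (tM iM)) (fun l => hxpos _ l) h
        (fun l => hMglob (tM iM) l)
      have hb_le : (∑ l ∈ Finset.univ.erase iM, b iM l (tM iM) (x (tM iM) l)) ≤
          x (tM iM) iM *
            ∑ l ∈ Finset.univ.erase iM, b iM l (tM iM) (x (tM iM) l) / x (tM iM) l := by
        rw [Finset.mul_sum]
        refine Finset.sum_le_sum fun l hl => ?_
        have hl' : l ≠ iM := Finset.ne_of_mem_erase hl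
        have hxl := hxpos (tM iM) l
        have hbnn := hb_nonneg iM l hl' (tM iM) (x (tM iM) l) hxl.le
        have h2 : b iM l (tM iM) (x (tM iM) l) / x (tM iM) l * x (tM iM) l ≤
            b iM l (tM iM) (x (tM iM) l) / x (tM iM) l * x (tM iM) iM :=
          mul_le_mul_of_nonneg_left (hMglob (tM iM) l) (div_nonneg hbnn hxl.le)
        rw [div_mul_cancel₀ _ hxl.ne'] at h2
        rw [mul_comm]
        exact h2
      have hf_le : (∑ j, p iM j (tM iM) *
            (x (tM iM - τ j) iM * Real.exp (-x (tM iM - τ j) iM)))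
          ≤ (∑ j, p iM j (tM iM)) * Real.exp (-1) := by
        rw [Finset.sum_mul]
        exact Finset.sum_le_sum fun j _ =>
          mul_le_mul_of_nonneg_left (f_le_einv _) (hp_nonneg iM j _)
      have hPb := hPle iM (tM iM) (htMmem iM)
      have he1 : (0:ℝ) < Real.exp (-1) := Real.exp_pos _
      have hQP : (∑ j, p iM j (tM iM)) * Real.exp (-1) ≤ P * Real.exp (-1) :=
        mul_le_mul_of_nonneg_right hPb he1.le
      have hβM : β * x (tM iM) iM < P * Real.exp (-1) := by nlinarith
      have hfin : x (tM iM) iM < P * Real.exp (-1) / β := by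
        rw [lt_div_iff₀ hβ]; linarith
      have h1 : P * Real.exp (-1) / β ≤ max R' (P * Real.exp (-1) / β) := le_max_right _ _
      rw [hR₀def]; linarith
  -- global minimum
  have hminc : ∀ l : Fin N, ∃ s ∈ Set.Icc (0:ℝ) T,
      IsMinOn (fun t => x t l) (Set.Icc 0 T) s :=
    fun l => isCompact_Icc.exists_isMinOn hIcc (hxcoord l).continuousOn
  choose tm htmmem htmmin using hminc
  obtain ⟨im, _, him⟩ := Finset.exists_min_image Finset.univ (fun l => x (tm l) l) hne
  have hmglob : ∀ s, ∀ l, x (tm im) im ≤ x s l := by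
    intro s l
    obtain ⟨s', hs', he⟩ := (hxp l).exists_mem_Ico₀ hT s
    calc x (tm im) im ≤ x (tm l) l := him l (Finset.mem_univ l)
      _ ≤ x s' l := htmmin l (Set.Ico_subset_Icc_self hs')
      _ = x s l := he.symm
  have hmpos : 0 < x (tm im) im := hxpos _ _
  -- lower bound for the minimum
  have hεm : ε₀ ≤ x (tm im) im := by
    by_contra hcon
    push_neg at hcon
    have hmρ : x (tm im) im ≤ ρ := le_of_lt (lt_of_lt_of_le hcon (min_le_left _ _))
    have hmc : x (tm im) im < Real.log (1-δ)⁻¹ :=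
      lt_of_lt_of_le hcon ((min_le_right _ _).trans (min_le_left _ _))
    have hmR : x (tm im) im ≤ R₀ * Real.exp (-R₀) / (1-δ) :=
      le_of_lt (lt_of_lt_of_le hcon ((min_le_right _ _).trans (min_le_right _ _)))
    have hloc : IsLocalMin (fun s => x s im) (tm im) :=
      (isMinOn_univ_iff.mpr fun s => hmglob s im).isLocalMin Filter.univ_mem
    have heq := hbalance (tm im) im hloc.deriv_eq_zero
    have hlt := hH0 (tm im) im (x (tm im)) (fun l => hxpos _ l) hmρ
      (fun l => hmglob (tm im) l)
    have hb_ge : x (tm im) im *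
          (∑ l ∈ Finset.univ.erase im, b im l (tm im) (x (tm im) l) / x (tm im) l) ≤
        ∑ l ∈ Finset.univ.erase im, b im l (tm im) (x (tm im) l) := by
      rw [Finset.mul_sum]
      refine Finset.sum_le_sum fun l hl => ?_
      have hl' : l ≠ im := Finset.ne_of_mem_erase hl
      have hxl := hxpos (tm im) l
      have hbnn := hb_nonneg im l hl' (tm im) (x (tm im) l) hxl.le
      have h2 : b im l (tm im) (x (tm im) l) / x (tm im) l * x (tm im) im ≤
          b im l (tm im) (x (tm im) l) / x (tm im) l * x (tm im) l :=
        mul_le_mul_of_nonneg_left (hmglob (tm im) l) (div_nonneg hbnn hxl.le)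
      rw [div_mul_cancel₀ _ hxl.ne'] at h2
      rw [mul_comm]
      exact h2
    -- the delayed-term lower bound
    have hlow : ∀ u : ℝ, x (tm im) im ≤ u → u ≤ R₀ →
        (1 - δ) * x (tm im) im ≤ u * Real.exp (-u) := by
      intro u hu1 hu2
      have hfm : (1 - δ) * x (tm im) im ≤ x (tm im) im * Real.exp (-(x (tm im) im)) := by
        have hexp : (1 - δ) ≤ Real.exp (-(x (tm im) im)) := by
          have h3 : -(x (tm im) im) > Real.log (1-δ) := by
            rw [Real.log_inv] at hmc; linarith
          have := Real.exp_log hδ1'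
          nlinarith [Real.exp_lt_exp.mpr h3]
        nlinarith [hmpos]
      have hfR : (1 - δ) * x (tm im) im ≤ R₀ * Real.exp (-R₀) := by
        rw [le_div_iff₀ hδ1'] at hmR; linarith
      calc (1 - δ) * x (tm im) im
          ≤ min (x (tm im) im * Real.exp (-(x (tm im) im))) (R₀ * Real.exp (-R₀)) :=
            le_min hfm hfR
        _ ≤ u * Real.exp (-u) := f_min_endpoints hmpos.le hu1 hu2
    have hf_ge : (∑ j, p im j (tm im)) * ((1 - δ) * x (tm im) im) ≤
        ∑ j, p im j (tm im) *
          (x (tm im - τ j) im * Real.exp (-x (tm im - τ j) im)) := by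
      rw [Finset.sum_mul]
      refine Finset.sum_le_sum fun j _ => ?_
      exact mul_le_mul_of_nonneg_left
        (hlow _ (hmglob _ im) ((hMglob _ im).trans hMlt.le)) (hp_nonneg im j _)
    nlinarith
  intro t i
  exact ⟨hεm.trans (hmglob t i), (hMglob t i).trans hMlt.le⟩
end

section
/- Assume all coefficient functions are T-periodic in t for some fixed T > 0, and assume (H0-sys) and (p-sys). Define, for a constant vector ξ ∈ (0,∞)^N, ĝ_i(ξ) := (1/T)·∫₀^T [ G_i(t,ξ) − Σ_{l≠i} b_{i,l}(t, ξ_l) − f(ξ_i)·Σ_{j=1}^k p_{i,j}(t) ] dt. Then there exists ε > 0 such that ĝ_i(ξ) < 0 for every index i and every ξ ∈ [ε,∞)^N with ξ_i = ε. -/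
/-- Part of the degree argument of Theorem 4.2: under (H0-sys) and (p-sys) there is
`ε > 0` such that the averaged map `ĝ` satisfies `ĝ_i(ξ) < 0` on every face
`ξ_i = ε` of the box `[ε,∞)^N`. -/
theorem nicholson_system_average_negative_on_lower_faces
    (N k : ℕ) (hN : 2 ≤ N) (hk : 0 < k)
    (T : ℝ) (hT : 0 < T)
    (d : Fin N → ℝ → ℝ → ℝ)
    (b : Fin N → Fin N → ℝ → ℝ → ℝ)
    (p : Fin N → Fin k → ℝ → ℝ)
    (H : Fin N → ℝ → (Fin N → ℝ) → ℝ)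
    (hd_cont : ∀ i, Continuous fun q : ℝ × ℝ => d i q.1 q.2)
    (hb_cont : ∀ i l, l ≠ i → Continuous fun q : ℝ × ℝ => b i l q.1 q.2)
    (hp_cont : ∀ i j, Continuous (p i j))
    (hH_cont : ∀ i, Continuous fun q : ℝ × (Fin N → ℝ) => H i q.1 q.2)
    (hd_nonneg : ∀ i t y, 0 ≤ y → 0 ≤ d i t y)
    (hb_nonneg : ∀ i l, l ≠ i → ∀ t y, 0 ≤ y → 0 ≤ b i l t y)
    (hp_nonneg : ∀ i j t, 0 ≤ p i j t)
    (hH_nonneg : ∀ i t, ∀ y : Fin N → ℝ, (∀ l, 0 ≤ y l) → 0 ≤ H i t y)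
    -- T-periodicity of the coefficients
    (hd_per : ∀ i t y, d i (t + T) y = d i t y)
    (hb_per : ∀ i l, l ≠ i → ∀ t y, b i l (t + T) y = b i l t y)
    (hp_per : ∀ i j t, p i j (t + T) = p i j t)
    (hH_per : ∀ i t y, H i (t + T) y = H i t y)
    -- (H0-sys)
    (hH0 : ∃ δ ∈ Set.Ioo (0 : ℝ) 1, ∃ ρ : ℝ, 0 < ρ ∧
      ∀ t, ∀ i, ∀ y : Fin N → ℝ, (∀ l, 0 < y l) → y i ≤ ρ →
        (∀ l, y i ≤ y l) →
        d i t (y i) + H i t y <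
          y i * ((∑ l ∈ Finset.univ.erase i, b i l t (y l) / y l)
            + (1 - δ) * ∑ j, p i j t))
    -- (p-sys)
    (hpc : ∃ c : ℝ, 0 < c ∧ ∀ i t, c ≤ ∑ j, p i j t) :
    ∃ ε : ℝ, 0 < ε ∧
      ∀ i, ∀ ξ : Fin N → ℝ, (∀ l, ε ≤ ξ l) → ξ i = ε →
        (1 / T) * (∫ t in (0 : ℝ)..T,
          (d i t (ξ i) + H i t ξ
            - (∑ l ∈ Finset.univ.erase i, b i l t (ξ l))
            - (ξ i * Real.exp (-ξ i)) * ∑ j, p i j t)) < 0 := by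
  obtain ⟨δ, hδ, ρ, hρ, hH0'⟩ := hH0
  obtain ⟨c, hc, hpc'⟩ := hpc
  set ε : ℝ := min ρ (δ / 2) with hεdef
  have hε : 0 < ε := lt_min hρ (by linarith [hδ.1])
  have hεδ : ε < δ := lt_of_le_of_lt (min_le_right _ _) (by linarith [hδ.1])
  have hεEnglish : (1 : ℝ) - δ < Real.exp (-ε) := by
    have h1 : (1 : ℝ) - ε ≤ Real.exp (-ε) := by
      have := Real.add_one_le_exp (-ε); linarith
    linarith
  refine ⟨ε, hε, ?_⟩
  intro i ξ hξ hξi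
  set m : ℝ := ε * c * (Real.exp (-ε) - (1 - δ)) with hm
  have hmpos : 0 < m := by
    apply mul_pos (mul_pos hε hc); linarith
  -- pointwise bound
  have hpt : ∀ t ∈ Set.Icc (0 : ℝ) T,
      d i t (ξ i) + H i t ξ
        - (∑ l ∈ Finset.univ.erase i, b i l t (ξ l))
        - (ξ i * Real.exp (-ξ i)) * ∑ j, p i j t ≤ -m := by
    intro t _
    have hξpos : ∀ l, 0 < ξ l := fun l => lt_of_lt_of_le hε (hξ l)
    have h0 := hH0' t i ξ hξpos (by rw [hξi]; exact min_le_left _ _)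
      (fun l => by rw [hξi]; exact hξ l)
    rw [hξi] at h0 ⊢
    have hb_bound : ε * (∑ l ∈ Finset.univ.erase i, b i l t (ξ l) / ξ l)
        ≤ ∑ l ∈ Finset.univ.erase i, b i l t (ξ l) := by
      rw [Finset.mul_sum]
      apply Finset.sum_le_sum
      intro l hl
      have hli : l ≠ i := Finset.ne_of_mem_erase hl
      have hbnn := hb_nonneg i l hli t (ξ l) (hξpos l).le
      rw [mul_div_assoc', div_le_iff₀ (hξpos l)]
      nlinarith [hξ l]
    have hpsum : c ≤ ∑ j, p i j t := hpc' i t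
    have hfac : (1 - δ) - Real.exp (-ε) < 0 := by linarith
    nlinarith [mul_le_mul_of_nonpos_left hpsum hfac.le, hε.le]
  -- continuity / integrability
  have hcont : Continuous fun t =>
      d i t (ξ i) + H i t ξ
        - (∑ l ∈ Finset.univ.erase i, b i l t (ξ l))
        - (ξ i * Real.exp (-ξ i)) * ∑ j, p i j t := by
    apply Continuous.sub
    apply Continuous.sub
    · exact ((hd_cont i).comp (continuous_id.prodMk continuous_const)).add
        ((hH_cont i).comp (continuous_id.prodMk continuous_const))
    · exact continuous_finset_sum _ fun l hl =>
        (hb_cont i l (Finset.ne_of_mem_erase hl)).comp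
          (continuous_id.prodMk continuous_const)
    · exact continuous_const.mul (continuous_finset_sum _ fun j _ => hp_cont i j)
  have hint : IntervalIntegrable (fun t =>
      d i t (ξ i) + H i t ξ
        - (∑ l ∈ Finset.univ.erase i, b i l t (ξ l))
        - (ξ i * Real.exp (-ξ i)) * ∑ j, p i j t)
      MeasureTheory.volume 0 T := hcont.intervalIntegrable 0 T
  have hI : (∫ t in (0 : ℝ)..T,
      (d i t (ξ i) + H i t ξ
        - (∑ l ∈ Finset.univ.erase i, b i l t (ξ l))
        - (ξ i * Real.exp (-ξ i)) * ∑ j, p i j t)) ≤ (T - 0) * (-m) := by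
    have h2 := intervalIntegral.integral_mono_on hT.le hint
      (intervalIntegrable_const (c := -m)) hpt
    rwa [intervalIntegral.integral_const, smul_eq_mul] at h2
  have hneg : (∫ t in (0 : ℝ)..T,
      (d i t (ξ i) + H i t ξ
        - (∑ l ∈ Finset.univ.erase i, b i l t (ξ l))
        - (ξ i * Real.exp (-ξ i)) * ∑ j, p i j t)) < 0 := by
    have : (T - 0) * (-m) < 0 := by nlinarith
    linarith
  exact mul_neg_of_pos_of_neg (by positivity) hneg
end

section
/- Assume all coefficient functions are T-periodic in t for some fixed T > 0, and assume (per). Define, for a constant vector ξ ∈ (0,∞)^N, ĝ_i(ξ) := (1/T)·∫₀^T [ G_i(t,ξ) − Σ_{l≠i} b_{i,l}(t, ξ_l) − f(ξ_i)·Σ_{j=1}^k p_{i,j}(t) ] dt. Then there exists R* > 0 such that for every R ≥ R*, every index i and every ξ ∈ (0,R]^N with ξ_i = R, one has ĝ_i(ξ) > 0. -/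
/-- Part of the degree argument of Theorem 4.2: under (per) there is `R* > 0` such
that for every `R ≥ R*` the averaged map `ĝ` satisfies `ĝ_i(ξ) > 0` on every face
`ξ_i = R` of the box `(0,R]^N`. -/
theorem nicholson_system_average_positive_on_upper_faces
    (N k : ℕ) (hN : 2 ≤ N) (hk : 0 < k)
    (T : ℝ) (hT : 0 < T)
    (d : Fin N → ℝ → ℝ → ℝ)
    (b : Fin N → Fin N → ℝ → ℝ → ℝ)
    (p : Fin N → Fin k → ℝ → ℝ)
    (H : Fin N → ℝ → (Fin N → ℝ) → ℝ)
    (hd_cont : ∀ i, Continuous fun q : ℝ × ℝ => d i q.1 q.2)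
    (hb_cont : ∀ i l, l ≠ i → Continuous fun q : ℝ × ℝ => b i l q.1 q.2)
    (hp_cont : ∀ i j, Continuous (p i j))
    (hH_cont : ∀ i, Continuous fun q : ℝ × (Fin N → ℝ) => H i q.1 q.2)
    (hd_nonneg : ∀ i t y, 0 ≤ y → 0 ≤ d i t y)
    (hb_nonneg : ∀ i l, l ≠ i → ∀ t y, 0 ≤ y → 0 ≤ b i l t y)
    (hp_nonneg : ∀ i j t, 0 ≤ p i j t)
    (hH_nonneg : ∀ i t, ∀ y : Fin N → ℝ, (∀ l, 0 ≤ y l) → 0 ≤ H i t y)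
    -- T-periodicity of the coefficients
    (hd_per : ∀ i t y, d i (t + T) y = d i t y)
    (hb_per : ∀ i l, l ≠ i → ∀ t y, b i l (t + T) y = b i l t y)
    (hp_per : ∀ i j t, p i j (t + T) = p i j t)
    (hH_per : ∀ i t y, H i (t + T) y = H i t y)
    -- (per)
    (hper : ∃ β : ℝ, 0 < β ∧ ∃ R' : ℝ, 0 < R' ∧
      ∀ t, ∀ i, ∀ y : Fin N → ℝ, (∀ l, 0 < y l) → R' ≤ y i →
        (∀ l, y l ≤ y i) →
        d i t (y i) + H i t y >
          y i * ((∑ l ∈ Finset.univ.erase i, b i l t (y l) / y l) + β)) :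
    ∃ Rs : ℝ, 0 < Rs ∧
      ∀ R : ℝ, Rs ≤ R →
        ∀ i, ∀ ξ : Fin N → ℝ, (∀ l, 0 < ξ l ∧ ξ l ≤ R) → ξ i = R →
          0 < (1 / T) * (∫ t in (0 : ℝ)..T,
            (d i t (ξ i) + H i t ξ
              - (∑ l ∈ Finset.univ.erase i, b i l t (ξ l))
              - (ξ i * Real.exp (-ξ i)) * ∑ j, p i j t)) := by
  obtain ⟨β, hβ, R', hR', hmain⟩ := hper
  have hNe : (Finset.univ : Finset (Fin N)).Nonempty :=
    ⟨⟨0, by omega⟩, Finset.mem_univ _⟩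
  set M : Fin N → ℝ := fun i => ∫ t in (0 : ℝ)..T, ∑ j, p i j t with hMdef
  set Mm : ℝ := Finset.univ.sup' hNe M with hMmdef
  have hMle : ∀ i, M i ≤ Mm := fun i => Finset.le_sup' M (Finset.mem_univ i)
  refine ⟨max R' (max 1 (Mm / (T * β))), lt_of_lt_of_le hR' (le_max_left _ _), ?_⟩
  intro R hR i ξ hξ hξi
  subst hξi
  have hTβ : 0 < T * β := mul_pos hT hβ
  have hRR' : R' ≤ ξ i := le_trans (le_max_left _ _) hR
  have hR1 : (1 : ℝ) ≤ ξ i := le_trans (le_trans (le_max_left _ _) (le_max_right _ _)) hR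
  have hRpos : 0 < ξ i := lt_of_lt_of_le one_pos hR1
  have hRM : Mm / (T * β) ≤ ξ i := le_trans (le_trans (le_max_right _ _) (le_max_right _ _)) hR
  -- exp (-R) * Mm < T * β
  have hexpkey : Real.exp (-ξ i) * Mm < T * β := by
    have h1 : Mm / (T * β) < Real.exp (ξ i) := by
      have := Real.add_one_le_exp (Mm / (T * β))
      have h2 : Real.exp (Mm / (T * β)) ≤ Real.exp (ξ i) := Real.exp_le_exp.mpr hRM
      linarith
    have h2 : Mm < T * β * Real.exp (ξ i) := by
      rw [div_lt_iff₀ hTβ] at h1; linarith [h1]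
    have h3 : Real.exp (-ξ i) * Mm < Real.exp (-ξ i) * (T * β * Real.exp (ξ i)) :=
      (mul_lt_mul_iff_right₀ (Real.exp_pos _)).mpr h2
    calc Real.exp (-ξ i) * Mm < Real.exp (-ξ i) * (T * β * Real.exp (ξ i)) := h3
      _ = T * β * (Real.exp (-ξ i) * Real.exp (ξ i)) := by ring
      _ = T * β := by rw [← Real.exp_add]; simp
  set φ : ℝ → ℝ := fun t =>
    d i t (ξ i) + H i t ξ - (∑ l ∈ Finset.univ.erase i, b i l t (ξ l))
      - (ξ i * Real.exp (-ξ i)) * ∑ j, p i j t with hφdef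
  set ψ : ℝ → ℝ := fun t =>
    β * ξ i - (ξ i * Real.exp (-ξ i)) * ∑ j, p i j t with hψdef
  -- pointwise bound
  have key : ∀ t, ψ t ≤ φ t := by
    intro t
    have hG := hmain t i ξ (fun l => (hξ l).1) hRR' (fun l => (hξ l).2)
    have hsum : (∑ l ∈ Finset.univ.erase i, b i l t (ξ l)) ≤
        ξ i * ∑ l ∈ Finset.univ.erase i, b i l t (ξ l) / ξ l := by
      rw [Finset.mul_sum]
      apply Finset.sum_le_sum
      intro l hl
      have hli : l ≠ i := (Finset.mem_erase.mp hl).1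
      have hb0 : 0 ≤ b i l t (ξ l) := hb_nonneg i l hli t (ξ l) (hξ l).1.le
      have hlpos : 0 < ξ l := (hξ l).1
      calc b i l t (ξ l) = b i l t (ξ l) / ξ l * ξ l := by
            field_simp
        _ ≤ b i l t (ξ l) / ξ l * ξ i :=
            mul_le_mul_of_nonneg_left (hξ l).2 (div_nonneg hb0 hlpos.le)
        _ = ξ i * (b i l t (ξ l) / ξ l) := mul_comm _ _
    have hexpand : ξ i * ((∑ l ∈ Finset.univ.erase i, b i l t (ξ l) / ξ l) + β)
        = ξ i * (∑ l ∈ Finset.univ.erase i, b i l t (ξ l) / ξ l) + ξ i * β :=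
      mul_add _ _ _
    simp only [hφdef, hψdef]
    rw [hexpand] at hG
    linarith
  -- integrability
  have hφcont : Continuous φ := by
    apply Continuous.sub
    apply Continuous.sub
    · exact ((hd_cont i).comp (continuous_id.prodMk continuous_const)).add
        ((hH_cont i).comp (continuous_id.prodMk continuous_const))
    · exact continuous_finset_sum _ fun l hl =>
        (hb_cont i l (Finset.mem_erase.mp hl).1).comp
          (continuous_id.prodMk continuous_const)
    · exact continuous_const.mul (continuous_finset_sum _ fun j _ => hp_cont i j)
  have hψcont : Continuous ψ :=
    continuous_const.sub
      (continuous_const.mul (continuous_finset_sum _ fun j _ => hp_cont i j))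
  have hφint : IntervalIntegrable φ MeasureTheory.volume 0 T :=
    hφcont.intervalIntegrable 0 T
  have hψint : IntervalIntegrable ψ MeasureTheory.volume 0 T :=
    hψcont.intervalIntegrable 0 T
  have hle : (∫ t in (0 : ℝ)..T, ψ t) ≤ ∫ t in (0 : ℝ)..T, φ t :=
    intervalIntegral.integral_mono_on hT.le hψint hφint fun t _ => key t
  have hpint : IntervalIntegrable (fun t => (ξ i * Real.exp (-ξ i)) * ∑ j, p i j t)
      MeasureTheory.volume 0 T :=
    (continuous_const.mul (continuous_finset_sum _ fun j _ => hp_cont i j)).intervalIntegrable 0 T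
  have hψval : (∫ t in (0 : ℝ)..T, ψ t)
      = β * ξ i * T - (ξ i * Real.exp (-ξ i)) * M i := by
    have : (∫ t in (0 : ℝ)..T, ψ t)
        = (∫ _t in (0 : ℝ)..T, β * ξ i)
          - ∫ t in (0 : ℝ)..T, (ξ i * Real.exp (-ξ i)) * ∑ j, p i j t :=
      intervalIntegral.integral_sub (intervalIntegrable_const) hpint
    rw [this, intervalIntegral.integral_const, intervalIntegral.integral_const_mul]
    simp [hMdef, smul_eq_mul]
    ring
  have hψpos : 0 < ∫ t in (0 : ℝ)..T, ψ t := by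
    rw [hψval]
    have h1 : (ξ i * Real.exp (-ξ i)) * M i ≤ (ξ i * Real.exp (-ξ i)) * Mm :=
      mul_le_mul_of_nonneg_left (hMle i)
        (mul_nonneg hRpos.le (Real.exp_pos _).le)
    have h2 : ξ i * (Real.exp (-ξ i) * Mm) < ξ i * (T * β) :=
      (mul_lt_mul_iff_right₀ hRpos).mpr hexpkey
    nlinarith [h1, h2]
  exact mul_pos (by positivity) (lt_of_lt_of_le hψpos hle)
end

section
/- Assume (p-sys) and (atrae). Then every positive solution of the N-dimensional Nicholson system tends to zero: for each index i, x_i(t) → 0 as t → +∞. -/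
open Filter Set

/-- Auxiliary bounding function for the Nicholson nonlinearity `f(y) = y e^{-y}`. -/
noncomputable def nichPhi (B : ℝ) : ℝ := min B 1 * Real.exp (-(min B 1))

lemma nichPhi_nonneg {B : ℝ} (hB : 0 ≤ B) : 0 ≤ nichPhi B :=
  mul_nonneg (le_min hB zero_le_one) (Real.exp_pos _).le

lemma nichPhi_lt {B : ℝ} (hB : 0 < B) : nichPhi B < B := by
  have hm : 0 < min B 1 := lt_min hB one_pos
  have h1 : Real.exp (-(min B 1)) < 1 := by
    rw [Real.exp_lt_one_iff]; linarith
  calc min B 1 * Real.exp (-(min B 1)) < min B 1 * 1 :=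
        mul_lt_mul_of_pos_left h1 hm
    _ = min B 1 := mul_one _
    _ ≤ B := min_le_left _ _

lemma nichPhi_fixed {L : ℝ} (h0 : 0 ≤ L) (h : nichPhi L = L) : L = 0 := by
  rcases eq_or_lt_of_le h0 with he | hl
  · exact he.symm
  · exact absurd h (ne_of_lt (nichPhi_lt hl))

lemma nichPhi_continuous : Continuous nichPhi := by
  unfold nichPhi
  exact (continuous_id.min continuous_const).mul
    ((continuous_id.min continuous_const).neg.rexp)

lemma f_le_nichPhi {u B : ℝ} (hu : 0 ≤ u) (huB : u ≤ B) :
    u * Real.exp (-u) ≤ nichPhi B := by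
  rcases le_or_gt u 1 with h1 | h1
  · set m := min B 1 with hm
    have hum : u ≤ m := le_min huB h1
    have hm1 : m ≤ 1 := min_le_right _ _
    have hm0 : 0 ≤ m := le_trans hu hum
    have hexp : (u - m) + 1 ≤ Real.exp (u - m) := Real.add_one_le_exp _
    have key : u ≤ m * Real.exp (u - m) := by nlinarith
    have hpos : (0:ℝ) < Real.exp (-u) := Real.exp_pos _
    calc u * Real.exp (-u) ≤ m * Real.exp (u - m) * Real.exp (-u) :=
          mul_le_mul_of_nonneg_right key hpos.le
      _ = m * Real.exp (-m) := by
          rw [mul_assoc, ← Real.exp_add]; ring_nf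
      _ = nichPhi B := rfl
  · have hB1 : (1:ℝ) ≤ B := le_trans h1.le huB
    have hmin : min B 1 = 1 := min_eq_right hB1
    have hexp : (u - 1) + 1 ≤ Real.exp (u - 1) := Real.add_one_le_exp _
    have key : u ≤ Real.exp (u - 1) := by linarith
    have hpos : (0:ℝ) < Real.exp (-u) := Real.exp_pos _
    have : u * Real.exp (-u) ≤ Real.exp (u - 1) * Real.exp (-u) :=
      mul_le_mul_of_nonneg_right key hpos.le
    calc u * Real.exp (-u) ≤ Real.exp (u - 1) * Real.exp (-u) := this
      _ = Real.exp (-1) := by rw [← Real.exp_add]; ring_nf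
      _ = nichPhi B := by rw [nichPhi, hmin, one_mul]

/-- If a real function has a derivative `< r` at `s`, then just to the right of `s`
its values lie below the line through `(s, f s)` with slope `r`. -/
lemma eventually_lt_linear_of_deriv_lt {f : ℝ → ℝ} {s D r : ℝ}
    (hf : HasDerivAt f D s) (hDr : D < r) :
    ∀ᶠ z in nhdsWithin s (Set.Ioi s), f z < f s + r * (z - s) := by
  have hs := hasDerivAt_iff_tendsto_slope.mp hf
  have h1 : ∀ᶠ z in nhdsWithin s {s}ᶜ, slope f s z < r := hs.eventually_lt_const hDr
  have h2 : nhdsWithin s (Set.Ioi s) ≤ nhdsWithin s {s}ᶜ :=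
    nhdsWithin_mono s fun z hz => ne_of_gt hz
  filter_upwards [h1.filter_mono h2, self_mem_nhdsWithin] with z hz1 hz2
  have hzs : 0 < z - s := sub_pos.mpr hz2
  rw [slope_def_field] at hz1
  have := (div_lt_iff₀ hzs).mp hz1
  linarith

/-- Theorem 5.1 of the paper: under (p-sys) and (atrae), every positive solution of
the N-dimensional Nicholson system tends to zero as `t → +∞`. -/
theorem nicholson_system_zero_global_attractor
    (N k : ℕ) (hN : 2 ≤ N) (hk : 0 < k)
    (τ : Fin k → ℝ) (hτ : ∀ j, 0 < τ j)
    (τs : ℝ) (hτs_ub : ∀ j, τ j ≤ τs) (hτs_mem : ∃ j, τ j = τs)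
    (d : Fin N → ℝ → ℝ → ℝ)
    (b : Fin N → Fin N → ℝ → ℝ → ℝ)
    (p : Fin N → Fin k → ℝ → ℝ)
    (H : Fin N → ℝ → (Fin N → ℝ) → ℝ)
    (hd_cont : ∀ i, Continuous fun q : ℝ × ℝ => d i q.1 q.2)
    (hb_cont : ∀ i l, l ≠ i → Continuous fun q : ℝ × ℝ => b i l q.1 q.2)
    (hp_cont : ∀ i j, Continuous (p i j))
    (hH_cont : ∀ i, Continuous fun q : ℝ × (Fin N → ℝ) => H i q.1 q.2)
    (hd_nonneg : ∀ i t, 0 ≤ t → ∀ y, 0 ≤ y → 0 ≤ d i t y)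
    (hb_nonneg : ∀ i l, l ≠ i → ∀ t, 0 ≤ t → ∀ y, 0 ≤ y → 0 ≤ b i l t y)
    (hp_nonneg : ∀ i j t, 0 ≤ t → 0 ≤ p i j t)
    (hH_nonneg : ∀ i t, 0 ≤ t → ∀ y : Fin N → ℝ, (∀ l, 0 ≤ y l) → 0 ≤ H i t y)
    -- (p-sys)
    (hpc : ∃ c : ℝ, 0 < c ∧ ∀ i t, 0 ≤ t → c ≤ ∑ j, p i j t)
    -- (atrae), condition (5.1) of the paper
    (hatrae : ∀ t, 0 ≤ t → ∀ i, ∀ y : Fin N → ℝ, (∀ l, 0 < y l) →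
      y i * ((∑ l ∈ Finset.univ.erase i, b i l t (y l) / y l)
        + ∑ j, p i j t) ≤ d i t (y i) + H i t y)
    -- positive solution
    (x : ℝ → Fin N → ℝ)
    (hx_cont : Continuous x)
    (hx_pos : ∀ t, -τs ≤ t → ∀ i, 0 < x t i)
    (hx_diff : ∀ i, ∀ t, 0 ≤ t → DifferentiableAt ℝ (fun s => x s i) t)
    (hx_eq : ∀ i, ∀ t, 0 ≤ t →
      deriv (fun s => x s i) t =
        -d i t (x t i)
        + (∑ l ∈ Finset.univ.erase i, b i l t (x t l))
        + (∑ j, p i j t * (x (t - τ j) i * Real.exp (-x (t - τ j) i)))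
        - H i t (x t)) :
    ∀ i, Filter.Tendsto (fun t => x t i) Filter.atTop (nhds 0) := by
  obtain ⟨c, hc, hpc'⟩ := hpc
  obtain ⟨j₀, hj₀⟩ := hτs_mem
  have hτs : 0 < τs := hj₀ ▸ hτ j₀
  haveI : Nonempty (Fin N) := ⟨⟨0, by omega⟩⟩
  have hNe : (Finset.univ : Finset (Fin N)).Nonempty := Finset.univ_nonempty
  have hxc : ∀ i, Continuous fun s => x s i := fun i => (continuous_apply i).comp hx_cont
  set g : ℝ → ℝ := fun s => Finset.univ.sup' hNe (fun i => x s i) with hg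
  have hgc : Continuous g := Continuous.finset_sup'_apply hNe (fun i _ => hxc i)
  have hle_g : ∀ s i, x s i ≤ g s := fun s i => Finset.le_sup' _ (Finset.mem_univ i)
  have hg_exists : ∀ s, ∃ i, x s i = g s := by
    intro s
    obtain ⟨i, _, h⟩ := Finset.exists_mem_eq_sup' hNe (fun i => x s i)
    exact ⟨i, h.symm⟩
  -- Key derivative estimate
  have key_deriv : ∀ s : ℝ, 0 ≤ s → ∀ i : Fin N, ∀ A B : ℝ,
      x s i = A → (∀ l, x s l ≤ A) → (∀ j, x (s - τ j) i ≤ B) → nichPhi B ≤ A →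
      deriv (fun u => x u i) s ≤ c * (nichPhi B - A) := by
    intro s hs i A B hxiA hxlA hdel hφA
    rw [hx_eq i s hs]
    have hpos : ∀ l, 0 < x s l := hx_pos s (by linarith)
    have hat := hatrae s hs i (x s) hpos
    set Sq := ∑ l ∈ Finset.univ.erase i, b i l s (x s l) / x s l with hSq
    set Sp := ∑ j, p i j s with hSp
    set Sb := ∑ l ∈ Finset.univ.erase i, b i l s (x s l) with hSb
    set Spf := ∑ j, p i j s * (x (s - τ j) i * Real.exp (-x (s - τ j) i)) with hSpf
    have hat' : A * Sq + A * Sp ≤ d i s (x s i) + H i s (x s) := by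
      calc A * Sq + A * Sp = x s i * (Sq + Sp) := by rw [hxiA]; ring
        _ ≤ d i s (x s i) + H i s (x s) := hat
    have hb_diff : Sb ≤ A * Sq := by
      rw [hSq, Finset.mul_sum]
      apply Finset.sum_le_sum
      intro l hl
      have hlne : l ≠ i := Finset.ne_of_mem_erase hl
      have hbnn := hb_nonneg i l hlne s hs (x s l) (hpos l).le
      have hdiv : (1:ℝ) ≤ A / x s l := (one_le_div (hpos l)).mpr (hxlA l)
      calc b i l s (x s l) = b i l s (x s l) * 1 := (mul_one _).symm
        _ ≤ b i l s (x s l) * (A / x s l) := mul_le_mul_of_nonneg_left hdiv hbnn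
        _ = A * (b i l s (x s l) / x s l) := by ring
    have hp1 : Spf ≤ Sp * nichPhi B := by
      rw [hSp, Finset.sum_mul]
      apply Finset.sum_le_sum
      intro j _
      have hposd : 0 < x (s - τ j) i := by
        apply hx_pos (s - τ j) (by have := hτs_ub j; linarith) i
      exact mul_le_mul_of_nonneg_left (f_le_nichPhi hposd.le (hdel j)) (hp_nonneg i j s hs)
    have hp2 : Sp * (nichPhi B - A) ≤ c * (nichPhi B - A) :=
      mul_le_mul_of_nonpos_right (hpc' i s hs) (by linarith)
    have hring : Sp * (nichPhi B - A) = Sp * nichPhi B - A * Sp := by ring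
    linarith
  -- Invariance lemma
  have inv : ∀ t2 : ℝ, 0 ≤ t2 → ∀ A B : ℝ, nichPhi B < A → A ≤ B →
      (∀ s, t2 - τs ≤ s → s ≤ t2 → ∀ i, x s i ≤ B) →
      (∀ i, x t2 i ≤ A) → ∀ s, t2 ≤ s → ∀ i, x s i ≤ A := by
    intro t2 ht2 A B hφA hAB hwin h0
    by_contra hcon
    push_neg at hcon
    obtain ⟨s0, hs0, i0, hi0⟩ := hcon
    set E := {s : ℝ | t2 ≤ s ∧ ∃ i, A < x s i} with hE
    have hEne : E.Nonempty := ⟨s0, hs0, i0, hi0⟩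
    have hEbd : BddBelow E := ⟨t2, fun s hs => hs.1⟩
    set T := sInf E with hT
    have hTt2 : t2 ≤ T := le_csInf hEne (fun s hs => hs.1)
    have hT0 : 0 ≤ T := le_trans ht2 hTt2
    have hbefore : ∀ s, t2 ≤ s → s < T → ∀ i, x s i ≤ A := by
      intro s h1 h2 i
      by_contra h
      push_neg at h
      exact absurd (csInf_le hEbd ⟨h1, i, h⟩) (not_le.mpr h2)
    have hxT : ∀ l, x T l ≤ A := by
      intro l
      rcases eq_or_lt_of_le hTt2 with he | hlt'
      · exact he ▸ h0 l
      · have hcl : T ∈ closure (Set.Ico t2 T) := by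
          rw [closure_Ico (ne_of_lt hlt')]
          exact ⟨hTt2, le_refl T⟩
        haveI : (nhdsWithin T (Set.Ico t2 T)).NeBot :=
          mem_closure_iff_nhdsWithin_neBot.mp hcl
        refine le_of_tendsto (((hxc l).tendsto T).mono_left
          (nhdsWithin_le_nhds : nhdsWithin T (Set.Ico t2 T) ≤ nhds T)) ?_
        filter_upwards [self_mem_nhdsWithin] with s hs
        exact hbefore s hs.1 hs.2 l
    have hdelay : ∀ j (i : Fin N), x (T - τ j) i ≤ B := by
      intro j i
      rcases lt_or_ge (T - τ j) t2 with h | h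
      · exact hwin _ (by have := hτs_ub j; linarith) h.le i
      · exact le_trans (hbefore _ h (by have := hτ j; linarith) i) hAB
    have hsmall : ∀ i : Fin N, ∀ᶠ s in nhdsWithin T (Set.Ioi T), x s i < A := by
      intro i
      rcases lt_or_eq_of_le (hxT i) with h | h
      · exact (((hxc i).tendsto T).eventually_lt_const h).filter_mono nhdsWithin_le_nhds
      · have hD := key_deriv T hT0 i A B h hxT (fun j => hdelay j i) hφA.le
        have hneg : deriv (fun u => x u i) T < 0 :=
          lt_of_le_of_lt hD (by nlinarith)
        have hder : HasDerivAt (fun u => x u i) (deriv (fun u => x u i) T) T :=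
          (hx_diff i T hT0).hasDerivAt
        have := eventually_lt_linear_of_deriv_lt hder hneg
        filter_upwards [this] with s hs
        calc x s i < x T i + 0 * (s - T) := hs
          _ = A := by rw [h]; ring
    have hall : ∀ᶠ s in nhdsWithin T (Set.Ioi T), ∀ i, x s i < A := eventually_all.mpr hsmall
    obtain ⟨u, hu, hsub⟩ := mem_nhdsGT_iff_exists_Ioo_subset.mp hall
    have hTnotE : T ∉ E := by
      rintro ⟨-, i, hi⟩
      exact absurd hi (not_lt.mpr (hxT i))
    have hge : ∀ s ∈ E, u ≤ s := by
      intro s hs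
      by_contra hh
      push_neg at hh
      have hTs : T ≤ s := csInf_le hEbd hs
      have hTneq : T ≠ s := fun he => hTnotE (he ▸ hs)
      have : s ∈ Set.Ioo T u := ⟨lt_of_le_of_ne hTs hTneq, hh⟩
      obtain ⟨i, hi⟩ := hs.2
      exact absurd hi (not_lt.mpr (le_of_lt (hsub this i)))
    have : u ≤ T := le_csInf hEne hge
    exact absurd (lt_of_lt_of_le hu this) (lt_irrefl T)
  -- Reaching lemma
  have reach : ∀ t1 : ℝ, 0 ≤ t1 → ∀ B : ℝ, 0 < B → (∀ s, t1 ≤ s → ∀ i, x s i ≤ B) →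
      ∀ A, nichPhi B < A → ∃ t2, t1 + τs ≤ t2 ∧ ∀ i, x t2 i ≤ A := by
    intro t1 ht1 B hB hbnd A hA
    by_contra hcon
    push_neg at hcon
    have hgA : ∀ s, t1 + τs ≤ s → A < g s := by
      intro s hs
      obtain ⟨i, hi⟩ := hcon s hs
      exact lt_of_lt_of_le hi (hle_g s i)
    set a := t1 + τs with ha
    have hA0 : 0 < A := lt_of_le_of_lt (nichPhi_nonneg hB.le) hA
    set η := c * (A - nichPhi B) with hη
    have hηpos : 0 < η := mul_pos hc (by linarith)
    set tb := a + 2 * (B + 1) / η with htb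
    have hab : a < tb := by
      rw [htb]
      have : 0 < 2 * (B + 1) / η := by positivity
      linarith
    have hslope : ∀ s ∈ Set.Ico a tb, ∀ r, -η < r →
        ∃ᶠ z in nhdsWithin s (Set.Ioi s), slope g s z < r := by
      intro s hs r hr
      apply Filter.Eventually.frequently
      have hs0 : 0 ≤ s := by have := hs.1; rw [ha] at this; linarith
      have hAgs : A < g s := hgA s hs.1
      have hper : ∀ i : Fin N, ∀ᶠ z in nhdsWithin s (Set.Ioi s),
          x z i < g s + r * (z - s) := by
        intro i
        rcases lt_or_eq_of_le (hle_g s i) with hlt | heq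
        · have h1 : ∀ᶠ z in nhds s, x z i < (x s i + g s) / 2 :=
            ((hxc i).tendsto s).eventually_lt_const (by linarith)
          have hcont2 : Filter.Tendsto (fun z => g s + r * (z - s)) (nhds s)
              (nhds (g s + r * (s - s))) := by
            apply Filter.Tendsto.const_add
            exact (tendsto_id.sub_const s).const_mul r
          have h2 : ∀ᶠ z in nhds s, (x s i + g s) / 2 < g s + r * (z - s) := by
            apply hcont2.eventually_const_lt
            simp only [sub_self, mul_zero, add_zero]
            linarith
          filter_upwards [h1.filter_mono nhdsWithin_le_nhds,
            h2.filter_mono nhdsWithin_le_nhds] with z hz1 hz2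
          linarith
        · have hD := key_deriv s hs0 i (g s) B heq (fun l => hle_g s l)
            (fun j => hbnd _ (by have := hτs_ub j; rw [ha] at hs; have := hs.1; linarith) i)
            (by linarith [nichPhi_lt hB])
          have hds : deriv (fun u => x u i) s < r := by
            have h2 : c * (nichPhi B - g s) ≤ c * (nichPhi B - A) :=
              mul_le_mul_of_nonneg_left (by linarith) hc.le
            have h3 : c * (nichPhi B - A) = -η := by rw [hη]; ring
            linarith
          have hder : HasDerivAt (fun u => x u i) (deriv (fun u => x u i) s) s :=
            (hx_diff i s hs0).hasDerivAt
          have := eventually_lt_linear_of_deriv_lt hder hds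
          filter_upwards [this] with z hz
          calc x z i < x s i + r * (z - s) := hz
            _ = g s + r * (z - s) := by rw [heq]
      have hall := eventually_all.mpr hper
      filter_upwards [hall, self_mem_nhdsWithin] with z hz hzs
      have hzspos : 0 < z - s := sub_pos.mpr hzs
      have hgz : g z < g s + r * (z - s) := by
        rw [hg]
        apply Finset.sup'_lt_iff hNe |>.mpr
        intro i _
        exact hz i
      rw [slope_def_field]
      rw [div_lt_iff₀ hzspos]
      linarith
    have hbarrier := image_le_of_liminf_slope_right_lt_deriv_boundary
      (f := g) (f' := fun _ => -η) (a := a) (b := tb)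
      hgc.continuousOn hslope
      (B := fun s => B + 1 - η / 2 * (s - a)) (B' := fun _ => -(η / 2))
      (by
        simp only [sub_self, mul_zero, sub_zero]
        obtain ⟨i, hi⟩ := hg_exists a
        rw [← hi]
        have := hbnd a (by rw [ha]; linarith) i
        linarith)
      (by
        intro s
        have h1 : HasDerivAt (fun s => η / 2 * (s - a)) (η / 2) s := by
          simpa using ((hasDerivAt_id s).sub_const a).const_mul (η / 2)
        simpa using h1.const_sub (B + 1))
      (by intro s _ _; show -η < -(η / 2); linarith)
    have hend := hbarrier ⟨hab.le, le_refl tb⟩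
    have hval : B + 1 - η / 2 * (tb - a) = 0 := by
      rw [htb]
      field_simp
      ring
    rw [hval] at hend
    have := hgA tb (by rw [ha] at hab ⊢; linarith)
    linarith
  -- Initial bound
  obtain ⟨s0, hs0mem, hs0max⟩ := isCompact_Icc.exists_isMaxOn
    (Set.nonempty_Icc.mpr (by linarith : -τs ≤ (0:ℝ))) (hgc.continuousOn (s := Set.Icc (-τs) 0))
  set M0 := g s0 with hM0
  have hwin0 : ∀ s, -τs ≤ s → s ≤ 0 → ∀ i, x s i ≤ M0 := by
    intro s h1 h2 i
    exact le_trans (hle_g s i) (hs0max ⟨h1, h2⟩)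
  have hM0pos : 0 < M0 := by
    have h1 : 0 < x 0 ⟨0, by omega⟩ := hx_pos 0 (by linarith) _
    have h2 : x 0 ⟨0, by omega⟩ ≤ M0 := hwin0 0 (by linarith) le_rfl _
    linarith
  have hbase : ∀ s, (0:ℝ) ≤ s → ∀ i, x s i ≤ M0 := by
    apply inv 0 le_rfl M0 M0 (nichPhi_lt hM0pos) le_rfl
    · intro s h1 h2 i
      exact hwin0 s (by linarith) h2 i
    · exact hwin0 0 (by linarith) le_rfl
  -- Iteration step
  have step : ∀ B t1 : ℝ, 0 ≤ t1 → 0 < B → (∀ s, t1 ≤ s → ∀ i, x s i ≤ B) →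
      ∃ t2 : ℝ, 0 ≤ t2 ∧ ∀ s, t2 ≤ s → ∀ i, x s i ≤ (nichPhi B + B) / 2 := by
    intro B t1 ht1 hB hbnd
    have hφ := nichPhi_lt hB
    have hφ0 := nichPhi_nonneg hB.le
    have h1 : nichPhi B < (nichPhi B + B) / 2 := by linarith
    have h2 : (nichPhi B + B) / 2 ≤ B := by linarith
    obtain ⟨t2, ht2a, ht2x⟩ := reach t1 ht1 B hB hbnd _ h1
    have ht20 : 0 ≤ t2 := by linarith
    refine ⟨t2, ht20, inv t2 ht20 _ B h1 h2 ?_ ht2x⟩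
    intro s hs1 _ i
    exact hbnd s (by linarith) i
  -- Iterate
  set seq : ℕ → ℝ := fun n => Nat.rec M0 (fun _ Bn => (nichPhi Bn + Bn) / 2) n with hseq
  have hseq0 : seq 0 = M0 := rfl
  have hseqS : ∀ n, seq (n + 1) = (nichPhi (seq n) + seq n) / 2 := fun n => rfl
  have hseqall : ∀ n : ℕ, 0 < seq n ∧ ∃ t : ℝ, 0 ≤ t ∧ ∀ s, t ≤ s → ∀ i, x s i ≤ seq n := by
    intro n
    induction n with
    | zero => exact ⟨hM0pos, 0, le_rfl, hbase⟩
    | succ n ih =>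
      obtain ⟨hpos, t, ht, hbnd⟩ := ih
      obtain ⟨t2, ht2, h2⟩ := step (seq n) t ht hpos hbnd
      refine ⟨?_, t2, ht2, by rw [hseqS]; exact h2⟩
      rw [hseqS]
      have := nichPhi_nonneg hpos.le
      linarith
  have hanti : Antitone seq := by
    apply antitone_nat_of_succ_le
    intro n
    rw [hseqS]
    have := nichPhi_lt (hseqall n).1
    linarith
  have hbdd : BddBelow (Set.range seq) := by
    refine ⟨0, ?_⟩
    rintro y ⟨n, rfl⟩
    exact (hseqall n).1.le
  have hlim : Filter.Tendsto seq Filter.atTop (nhds (⨅ n, seq n)) :=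
    tendsto_atTop_ciInf hanti hbdd
  set L := ⨅ n, seq n with hL
  have hL0 : 0 ≤ L := le_ciInf fun n => (hseqall n).1.le
  have hlim2 : Filter.Tendsto (fun n => seq (n + 1)) Filter.atTop (nhds L) :=
    hlim.comp (Filter.tendsto_add_atTop_nat 1)
  have hlim3 : Filter.Tendsto (fun n => (nichPhi (seq n) + seq n) / 2) Filter.atTop
      (nhds ((nichPhi L + L) / 2)) :=
    (((nichPhi_continuous.tendsto L).comp hlim).add hlim).div_const 2
  have hlim2' : Filter.Tendsto (fun n => (nichPhi (seq n) + seq n) / 2) Filter.atTop (nhds L) := by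
    convert hlim2 using 1
  have hLeq : (nichPhi L + L) / 2 = L := tendsto_nhds_unique hlim3 hlim2'
  have hLfix : nichPhi L = L := by linarith
  have hLzero : L = 0 := nichPhi_fixed hL0 hLfix
  rw [hLzero] at hlim
  -- Conclusion
  intro i
  rw [tendsto_order]
  constructor
  · intro a ha
    filter_upwards [Filter.eventually_ge_atTop (0:ℝ)] with t ht
    have := hx_pos t (by linarith) i
    linarith
  · intro a ha
    obtain ⟨n, hn⟩ := (hlim.eventually_lt_const ha).exists
    obtain ⟨-, t, -, hbnd⟩ := hseqall n
    filter_upwards [Filter.eventually_ge_atTop t] with s hs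
    exact lt_of_le_of_lt (hbnd s hs i) hn
end

section
/- Let f : ℝ → ℝ be defined by f(y) = y·e^{−y}. Then for every a ≥ 0, the sequence of iterates f^[n](a) converges to 0 as n → ∞. -/
/-- The iterates of the Nicholson birth function `f(y) = y·e^{−y}` converge to `0`
for every starting point `a ≥ 0`. -/
theorem nicholson_birth_function_iterates_tendsto_zero
    (a : ℝ) (ha : 0 ≤ a) :
    Filter.Tendsto (fun n : ℕ => (fun y : ℝ => y * Real.exp (-y))^[n] a)
      Filter.atTop (nhds 0) := by
  set f : ℝ → ℝ := fun y => y * Real.exp (-y) with hf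
  set u : ℕ → ℝ := fun n => f^[n] a with hu
  have hnn : ∀ n, 0 ≤ u n := by
    intro n
    induction n with
    | zero => simpa [u] using ha
    | succ k ih =>
      have : u (k+1) = f (u k) := by simp [u, Function.iterate_succ_apply']
      rw [this]
      exact mul_nonneg ih (Real.exp_nonneg _)
  have hmono : Antitone u := by
    apply antitone_nat_of_succ_le
    intro n
    have h1 : u (n+1) = f (u n) := by simp [u, Function.iterate_succ_apply']
    rw [h1]
    have : Real.exp (-(u n)) ≤ 1 := Real.exp_le_one_iff.mpr (by linarith [hnn n])
    calc u n * Real.exp (-(u n)) ≤ u n * 1 := by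
          exact mul_le_mul_of_nonneg_left this (hnn n)
      _ = u n := mul_one _
  have hbdd : BddBelow (Set.range u) := ⟨0, by rintro x ⟨n, rfl⟩; exact hnn n⟩
  have hconv : Filter.Tendsto u Filter.atTop (nhds (⨅ n, u n)) :=
    tendsto_atTop_ciInf hmono hbdd
  set L := ⨅ n, u n with hL
  have hLnn : 0 ≤ L := le_ciInf hnn
  -- f is continuous
  have hcont : Continuous f := by
    exact continuous_id.mul (Real.continuous_exp.comp continuous_neg)
  have hshift : Filter.Tendsto (fun n => u (n+1)) Filter.atTop (nhds L) :=
    hconv.comp (Filter.tendsto_add_atTop_nat 1)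
  have hshift2 : Filter.Tendsto (fun n => f (u n)) Filter.atTop (nhds (f L)) :=
    (hcont.tendsto L).comp hconv
  have hfix : f L = L := by
    have heq : (fun n => u (n+1)) = fun n => f (u n) := by
      funext n; simp [u, Function.iterate_succ_apply']
    rw [heq] at hshift
    exact tendsto_nhds_unique hshift2 hshift
  have hL0 : L = 0 := by
    by_contra h
    have hLpos : 0 < L := lt_of_le_of_ne hLnn (Ne.symm h)
    have : Real.exp (-L) < 1 := Real.exp_lt_one_iff.mpr (by linarith)
    have : L * Real.exp (-L) < L * 1 := by
      exact mul_lt_mul_of_pos_left this hLpos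
    rw [mul_one] at this
    rw [hf] at hfix
    simp only at hfix
    linarith [hfix]
  rw [hL0] at hconv
  exact hconv
end
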